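/- arXiv:2101.10139 — 10 statements merged into one kernel-verified Lean document; each statement's English description precedes it below -/
import Mathlib

section
/- Fix α > 1 and set k₄ = 2·h·m·m₂·k₂·(α k₁/k₀)^{μ/γ}·(1 + (α k₁/k₀)^{(μ−1)/γ}) and H = (w/k₄)^{1/(μ−1)}. Let δ ∈ (0, H), κ = (k₀/k₁)^{1/γ}, K = (1 + (μ−1)·m·h·(κδ)^{μ−1})^{1/(μ−1)}, and let Δ > 0 satisfy Δ + m·h·Δ^μ = κδ/K. Then every solution x of the delay system with initial function φ satisfying ‖φ‖_h < Δ obeys ‖x(t)‖ < δ for all t ≥ 0 and x(t) → 0 as t → ∞. -/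
/-!
Along a solution, `v t = V (x t)` satisfies the Razumikhin estimate
`v' t ≤ -w ‖x t‖ ^ (γ + μ - 1) + 4 h m m₂ k₂ R ^ (2μ - 1) ‖x t‖ ^ (γ - 1)` whenever `‖x‖ ≤ R` on
`[t - 2h, t]`: the delayed value differs from `x t` by at most `2 m R ^ μ h`, and on the ball of
radius `R` the field is `2 m₂ R ^ (μ - 1)`-Lipschitz in its delayed argument.

On `[0, h]` the solution is compared with the solution of `ψ' = m ψ ^ μ` started at
`b + m h b ^ μ`, where `b < Δ` bounds the initial function; the choice of `Δ` and `K` makes it stay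
below `κ δ`, i.e. `v < k₀ δ ^ γ`. At a first time `v` reaches this level, `‖x‖ ≤ δ` on the window
while `‖x t‖ ≥ κ δ`, and `δ < H` makes the estimate negative, so the level is never reached.

For convergence, let `L > 0` be the `limsup` of `v`. Radii slightly above and below those of the
level `L` still make the estimate uniformly negative, so `v` eventually stays below a level
smaller than `L`, a contradiction.
-/

open Real Set RealInnerProductSpace

open Filter Topology

theorem HasDerivAt.nonneg_of_eventually_le_left {g : ℝ → ℝ} {d t : ℝ} (hd : HasDerivAt g d t)
    (hle : ∀ᶠ s in 𝓝[<] t, g s ≤ g t) : 0 ≤ d := by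
  refine ge_of_tendsto (hasDerivAt_iff_tendsto_slope_left_right.1 hd).1 ?_
  filter_upwards [hle, self_mem_nhdsWithin] with s hs hst
  rw [slope_def_field]
  exact div_nonneg_of_nonpos (sub_nonpos.2 hs) (sub_nonpos.2 (le_of_lt hst))

theorem forall_lt_of_hasDerivAt_neg_at_first_hit {g g' : ℝ → ℝ} {a b q : ℝ} (hab : a ≤ b)
    (hg : ContinuousOn g (Ici a)) (hlt : ∀ t ∈ Icc a b, g t < q)
    (hd : ∀ t > b, HasDerivAt g (g' t) t)
    (hneg : ∀ t > b, g t = q → (∀ s ∈ Icc a t, g s ≤ q) → g' t < 0) :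
    ∀ t ≥ a, g t < q := by
  by_contra! hex
  set S := Ici a ∩ g ⁻¹' Ici q
  have hS : IsClosed S := hg.preimage_isClosed_of_isClosed isClosed_Ici isClosed_Ici
  have hbdd : BddBelow S := ⟨a, fun s hs => hs.1⟩
  have hcS : sInf S ∈ S := hS.csInf_mem (let ⟨t, hta, ht⟩ := hex; ⟨t, hta, ht⟩) hbdd
  set c := sInf S
  have hbefore : ∀ s ∈ Ico a c, g s < q := fun s hs =>
    not_le.1 fun hqs => (csInf_le hbdd ⟨hs.1, hqs⟩).not_gt hs.2
  have hbc : b < c := not_le.1 fun hcb => (hlt c ⟨hcS.1, hcb⟩).not_ge hcS.2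
  have hleft : ∀ᶠ s in 𝓝[<] c, g s ≤ q := by
    filter_upwards [Ioo_mem_nhdsLT (hab.trans_lt hbc)] with s hs
    exact (hbefore s ⟨hs.1.le, hs.2⟩).le
  have hgc : g c = q :=
    le_antisymm (le_of_tendsto ((hd c hbc).continuousAt.tendsto.mono_left nhdsWithin_le_nhds)
      hleft) hcS.2
  have hle : ∀ s ∈ Icc a c, g s ≤ q := fun s hs =>
    hs.2.eq_or_lt.elim (fun hsc => hsc ▸ hgc.le) fun hsc => (hbefore s ⟨hs.1, hsc⟩).le
  exact (hneg c hbc hgc hle).not_ge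
    ((hd c hbc).nonneg_of_eventually_le_left (hgc ▸ hleft))

theorem eventually_lt_of_hasDerivAt_le_neg {g g' : ℝ → ℝ} {T ℓ c : ℝ} (hc : 0 < c)
    (hg : ContinuousOn g (Ici T)) (hg0 : ∀ t ≥ T, 0 ≤ g t)
    (hd : ∀ t > T, HasDerivAt g (g' t) t) (hneg : ∀ t > T, ℓ ≤ g t → g' t ≤ -c) :
    ∀ᶠ t in atTop, g t < ℓ := by
  obtain ⟨t₀, ht₀, hlt⟩ : ∃ t₀ ≥ T, g t₀ < ℓ := by
    by_contra! hge
    -- staying above `ℓ` makes `g` decrease at rate `c`, so it would become negative by time `t`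
    set t := T + g T / c + 1
    have hTt : T < t := by have := div_nonneg (hg0 T le_rfl) hc.le; linarith
    obtain ⟨ξ, hξ, hslope⟩ := exists_hasDerivAt_eq_slope g g' hTt
      (hg.mono Icc_subset_Ici_self) fun s hs => hd s hs.1
    have hdrop := hneg ξ hξ.1 (hge ξ hξ.1.le)
    rw [hslope, div_le_iff₀ (sub_pos.2 hTt)] at hdrop
    have hgt := hg0 t hTt.le
    have : c * (t - T) = g T + c := by simp only [t]; field_simp; ring
    linarith
  filter_upwards [eventually_ge_atTop t₀] with t ht
  exact forall_lt_of_hasDerivAt_neg_at_first_hit le_rfl (hg.mono (Ici_subset_Ici.2 ht₀))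
    (fun s hs => le_antisymm hs.2 hs.1 ▸ hlt) (fun s hs => hd s (ht₀.trans_lt hs))
    (fun s hs hgs _ => (hneg s (ht₀.trans_lt hs) hgs.ge).trans_lt (neg_lt_zero.2 hc)) t ht

theorem neg_mul_rpow_add_mul_rpow_le {w D r X γ μ : ℝ} (hw : 0 ≤ w) (hr : 0 < r)
    (hrX : r ≤ X) (hγ : 1 ≤ γ) (hμ : 0 ≤ μ) (hD : D ≤ w * r ^ μ) :
    -w * X ^ (γ + μ - 1) + D * X ^ (γ - 1) ≤ -(r ^ (γ - 1) * (w * r ^ μ - D)) := by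
  have hX : 0 < X := hr.trans_le hrX
  have hsplit : X ^ (γ + μ - 1) = X ^ (γ - 1) * X ^ μ := by
    rw [← rpow_add hX]; ring_nf
  have hγr : r ^ (γ - 1) ≤ X ^ (γ - 1) := rpow_le_rpow hr.le hrX (by linarith)
  have hμr : w * r ^ μ ≤ w * X ^ μ := mul_le_mul_of_nonneg_left (rpow_le_rpow hr.le hrX hμ) hw
  rw [hsplit]
  nlinarith [rpow_pos_of_pos hr (γ - 1)]

theorem mul_rpow_two_mul_sub_one_lt {C w μ κ δ R : ℝ} (hC : 0 ≤ C) (hμ : 1 ≤ μ) (hκ : 0 < κ)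
    (hR : 0 < R) (hRδ : R ≤ δ) (hgap : C * δ ^ (μ - 1) < w * κ ^ μ) :
    C * R ^ (2 * μ - 1) < w * (κ * R) ^ μ := by
  have hsplit : R ^ (2 * μ - 1) = R ^ (μ - 1) * R ^ μ := by rw [← rpow_add hR]; ring_nf
  rw [hsplit, mul_rpow hκ.le hR.le]
  have : C * R ^ (μ - 1) ≤ C * δ ^ (μ - 1) :=
    mul_le_mul_of_nonneg_left (rpow_le_rpow hR.le hRδ (by linarith)) hC
  nlinarith [rpow_pos_of_pos hR μ]

theorem exists_mul_rpow_lt_of_mul_rpow_lt {C w μ κ R₀ : ℝ} (hR₀ : 0 < R₀) (hκ : 0 < κ)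
    (hgap : C * R₀ ^ (2 * μ - 1) < w * (κ * R₀) ^ μ) :
    ∃ R > R₀, ∃ r ∈ Ioo 0 (κ * R₀), C * R ^ (2 * μ - 1) < w * r ^ μ := by
  have hupper : ∀ᶠ R in 𝓝 R₀, C * R ^ (2 * μ - 1) < w * (κ * R₀) ^ μ :=
    ((continuousAt_rpow_const _ _ (Or.inl hR₀.ne')).const_mul C).eventually_lt
      continuousAt_const hgap
  obtain ⟨R, hR, hR₀R⟩ := ((hupper.filter_mono nhdsWithin_le_nhds).and
    (self_mem_nhdsWithin : Ioi R₀ ∈ 𝓝[>] R₀)).exists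
  have hκR₀ : 0 < κ * R₀ := mul_pos hκ hR₀
  have hlower : ∀ᶠ r in 𝓝 (κ * R₀), C * R ^ (2 * μ - 1) < w * r ^ μ :=
    continuousAt_const.eventually_lt
      ((continuousAt_rpow_const _ _ (Or.inl hκR₀.ne')).const_mul w) hR
  obtain ⟨r, hr, hrI⟩ := ((hlower.filter_mono nhdsWithin_le_nhds).and
    (Ioo_mem_nhdsLT hκR₀)).exists
  exact ⟨R, hR₀R, r, hrI, hr⟩

theorem le_of_mul_rpow_le_mul_rpow {k a b γ : ℝ} (hk : 0 < k) (ha : 0 ≤ a) (hb : 0 ≤ b)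
    (hγ : 0 < γ) (hab : k * a ^ γ ≤ k * b ^ γ) : a ≤ b :=
  (rpow_le_rpow_iff ha hb hγ).1 (le_of_mul_le_mul_left hab hk)

theorem lt_of_mul_rpow_lt_mul_rpow {k a b γ : ℝ} (hk : 0 < k) (ha : 0 ≤ a) (hb : 0 ≤ b)
    (hγ : 0 < γ) (hab : k * a ^ γ < k * b ^ γ) : a < b :=
  (rpow_lt_rpow_iff ha hb hγ).1 (lt_of_mul_lt_mul_left hab hk.le)

def IsDelaySolution {E : Type*} [NormedAddCommGroup E] [NormedSpace ℝ E] (f : E × E → E) (h : ℝ)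
    (x : ℝ → E) : Prop :=
  ContinuousOn x (Ici (-h)) ∧ ∀ t > 0, HasDerivAt x (f (x t, x (t - h))) t

-- the solution of `ψ' = m ψ ^ μ`, `ψ 0 = c`, up to its blow-up time
noncomputable def blowupSolution (μ m c t : ℝ) : ℝ :=
  (c ^ (1 - μ) - (μ - 1) * m * t) ^ (-(μ - 1)⁻¹)

theorem blowupSolution_zero {μ m c : ℝ} (hμ : μ ≠ 1) (hc : 0 < c) :
    blowupSolution μ m c 0 = c := by
  rw [blowupSolution, mul_zero, sub_zero, ← rpow_mul hc.le]
  convert rpow_one c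
  field_simp [sub_ne_zero.2 hμ]
  ring

theorem hasDerivAt_blowupSolution {μ m c t : ℝ} (hμ : μ ≠ 1)
    (hpos : 0 < c ^ (1 - μ) - (μ - 1) * m * t) :
    HasDerivAt (blowupSolution μ m c) (m * blowupSolution μ m c t ^ μ) t := by
  have := (((hasDerivAt_id t).const_mul ((μ - 1) * m)).const_sub (c ^ (1 - μ))).rpow_const
    (p := -(μ - 1)⁻¹) (Or.inl hpos.ne')
  convert this using 1
  · rfl
  have hμ1 : μ - 1 ≠ 0 := sub_ne_zero.2 hμ
  have he : -(μ - 1)⁻¹ * μ = -(μ - 1)⁻¹ - 1 := by field_simp; ring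
  rw [blowupSolution, ← rpow_mul hpos.le, he, id]
  field_simp

theorem rpow_one_sub_add_lt_of_lt_div {μ m h c ρ : ℝ} (hμ : 1 < μ) (hmh : 0 ≤ m * h)
    (hc : 0 < c) (hρ : 0 < ρ)
    (hcρ : c < ρ / (1 + (μ - 1) * m * h * ρ ^ (μ - 1)) ^ (1 / (μ - 1))) :
    ρ ^ (1 - μ) + (μ - 1) * m * h < c ^ (1 - μ) := by
  set K := (1 + (μ - 1) * m * h * ρ ^ (μ - 1)) ^ (1 / (μ - 1))
  have hbase : 0 < 1 + (μ - 1) * m * h * ρ ^ (μ - 1) := by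
    have := mul_nonneg (mul_nonneg (sub_nonneg.2 hμ.le) hmh) (rpow_nonneg hρ.le (μ - 1))
    rw [mul_assoc (μ - 1) m h]; linarith
  have hK : 0 < K := rpow_pos_of_pos hbase _
  have hKμ : K ^ (1 - μ) = (1 + (μ - 1) * m * h * ρ ^ (μ - 1))⁻¹ := by
    rw [show 1 - μ = -(μ - 1) by ring, rpow_neg hK.le, ← rpow_mul hbase.le,
      one_div_mul_cancel (by linarith), rpow_one]
  have hinv : ρ ^ (1 - μ) * ρ ^ (μ - 1) = 1 := by rw [← rpow_add hρ]; simp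
  have hρK : (ρ / K) ^ (1 - μ) = ρ ^ (1 - μ) + (μ - 1) * m * h := by
    rw [div_rpow hρ.le hK.le, hKμ, div_inv_eq_mul]
    linear_combination ((μ - 1) * m * h) * hinv
  rw [← hρK]
  exact rpow_lt_rpow_of_neg hc hcρ (by linarith)

theorem blowupSolution_lt_of_lt_div {μ m h c ρ t : ℝ} (hμ : 1 < μ) (hm : 0 ≤ m) (hh : 0 ≤ h)
    (hc : 0 < c) (hρ : 0 < ρ)
    (hcρ : c < ρ / (1 + (μ - 1) * m * h * ρ ^ (μ - 1)) ^ (1 / (μ - 1))) (ht : t ∈ Icc 0 h) :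
    0 < c ^ (1 - μ) - (μ - 1) * m * t ∧ blowupSolution μ m c t < ρ := by
  have hlt : ρ ^ (1 - μ) < c ^ (1 - μ) - (μ - 1) * m * t := by
    have := rpow_one_sub_add_lt_of_lt_div hμ (mul_nonneg hm hh) hc hρ hcρ
    linarith [mul_le_mul_of_nonneg_left ht.2 (mul_nonneg (by linarith : 0 ≤ μ - 1) hm)]
  have hρ' : 0 < ρ ^ (1 - μ) := rpow_pos_of_pos hρ _
  refine ⟨hρ'.trans hlt, ?_⟩
  calc blowupSolution μ m c t < (ρ ^ (1 - μ)) ^ (-(μ - 1)⁻¹) :=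
        rpow_lt_rpow_of_neg hρ' hlt (neg_neg_of_pos (inv_pos.2 (by linarith)))
    _ = ρ := by
        rw [← rpow_mul hρ.le]
        convert rpow_one ρ
        field_simp [(by linarith : μ - 1 ≠ 0)]
        ring

theorem norm_sub_le_of_norm_fderiv_snd_le {E F : Type*} [NormedAddCommGroup E] [NormedSpace ℝ E]
    [NormedAddCommGroup F] [NormedSpace ℝ F] {f : E × E → F} {m₂ p R : ℝ}
    (hf : Differentiable ℝ f)
    (hfy : ∀ x y, ‖fderiv ℝ (fun y' => f (x, y')) y‖ ≤ m₂ * (‖x‖ ^ p + ‖y‖ ^ p))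
    (hm₂ : 0 ≤ m₂) (hp : 0 ≤ p) {x y y' : E} (hx : ‖x‖ ≤ R) (hy : ‖y‖ ≤ R) (hy' : ‖y'‖ ≤ R) :
    ‖f (x, y) - f (x, y')‖ ≤ 2 * m₂ * R ^ p * ‖y - y'‖ := by
  refine (convex_closedBall (0 : E) R).norm_image_sub_le_of_norm_fderiv_le
    (fun z _ => (hf (x, z)).comp z ((differentiableAt_const x).prodMk differentiableAt_id))
    (fun z hz => (hfy x z).trans ?_) (mem_closedBall_zero_iff.2 hy') (mem_closedBall_zero_iff.2 hy)
  have hz : ‖z‖ ≤ R := mem_closedBall_zero_iff.1 hz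
  have := rpow_le_rpow (norm_nonneg _) hx hp
  have := rpow_le_rpow (norm_nonneg _) hz hp
  nlinarith

namespace IsDelaySolution

variable {E : Type*} [NormedAddCommGroup E] [NormedSpace ℝ E] {f : E × E → E} {h : ℝ}
  {x : ℝ → E}

theorem continuousOn_rhs (hx : IsDelaySolution f h x) (hf : Continuous f) (hh : 0 ≤ h) :
    ContinuousOn (fun t => f (x t, x (t - h))) (Ici 0) := by
  refine hf.comp_continuousOn ((hx.1.mono (Ici_subset_Ici.2 (by linarith))).prodMk ?_)
  exact hx.1.comp (continuousOn_id.sub continuousOn_const) fun t ht => by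
    simp only [mem_Ici] at ht ⊢; linarith

theorem hasDerivWithinAt_Ici (hx : IsDelaySolution f h x) (hf : Continuous f) (hh : 0 ≤ h)
    {t : ℝ} (ht : 0 ≤ t) : HasDerivWithinAt x (f (x t, x (t - h))) (Ici t) t := by
  rcases ht.eq_or_lt with rfl | ht
  · -- `x` need not be differentiable at `0`; its right derivative there is the limit of `x'`
    refine hasDerivWithinAt_Ici_of_tendsto_deriv
      (fun s hs => (hx.2 s hs).differentiableAt.differentiableWithinAt)
      ((hx.1 0 (by simp [hh])).mono (Ioi_subset_Ici_self.trans (Ici_subset_Ici.2 (by linarith))))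
      self_mem_nhdsWithin ?_
    exact (((hx.continuousOn_rhs hf hh) 0 self_mem_Ici).mono Ioi_subset_Ici_self).tendsto.congr'
      (eventually_nhdsWithin_of_forall fun s hs => (hx.2 s hs).deriv.symm)
  · exact (hx.2 t ht).hasDerivWithinAt

theorem norm_sub_delay_le (hx : IsDelaySolution f h x) {m μ R t : ℝ}
    (hfb : ∀ y z : E, ‖f (y, z)‖ ≤ m * (‖y‖ ^ μ + ‖z‖ ^ μ)) (hm : 0 ≤ m) (hμ : 0 ≤ μ)
    (hh : 0 ≤ h) (ht : h < t) (hR : ∀ s ∈ Icc (t - 2 * h) t, ‖x s‖ ≤ R) :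
    ‖x t - x (t - h)‖ ≤ 2 * m * R ^ μ * h := by
  have hbound : ∀ s ∈ Ico (t - h) t, ‖f (x s, x (s - h))‖ ≤ 2 * m * R ^ μ := fun s hs => by
    have h1 := rpow_le_rpow (norm_nonneg _) (hR s ⟨by linarith [hs.1], hs.2.le⟩) hμ
    have h2 := rpow_le_rpow (norm_nonneg _) (hR (s - h) ⟨by linarith [hs.1], by linarith [hs.2]⟩) hμ
    nlinarith [hfb (x s) (x (s - h))]
  have := norm_image_sub_le_of_norm_deriv_le_segment'
    (fun s hs => (hx.2 s (by linarith [hs.1])).hasDerivWithinAt) hbound t ⟨by linarith, le_rfl⟩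
  rwa [sub_sub_cancel] at this

theorem norm_lt_of_initial_le (hx : IsDelaySolution f h x) (hf : Continuous f) {m μ b ρ : ℝ}
    (hfb : ∀ y z : E, ‖f (y, z)‖ ≤ m * (‖y‖ ^ μ + ‖z‖ ^ μ)) (hm : 0 < m) (hμ : 1 < μ)
    (hh : 0 ≤ h) (hb : 0 < b) (hxb : ∀ θ ∈ Icc (-h) 0, ‖x θ‖ ≤ b) (hρ : 0 < ρ)
    (hbρ : b + m * h * b ^ μ < ρ / (1 + (μ - 1) * m * h * ρ ^ (μ - 1)) ^ (1 / (μ - 1))) :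
    ∀ t ∈ Icc (-h) h, ‖x t‖ < ρ := by
  set c := b + m * h * b ^ μ
  have hbμ : 0 < b ^ μ := rpow_pos_of_pos hb μ
  have hbc : b ≤ c := le_add_of_nonneg_right (by positivity)
  set ψ := blowupSolution μ m c
  have hψ0 : ψ 0 = c := blowupSolution_zero hμ.ne' (hb.trans_le hbc)
  have hψρ : ∀ t ∈ Icc 0 h, 0 < c ^ (1 - μ) - (μ - 1) * m * t ∧ ψ t < ρ := fun t ht =>
    blowupSolution_lt_of_lt_div hμ hm.le hh (hb.trans_le hbc) hρ hbρ ht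
  -- comparison function: it absorbs the delayed term `m ‖x (t - h)‖ ^ μ ≤ m b ^ μ`
  set B : ℝ → ℝ := fun t => ψ t + m * b ^ μ * t - m * h * b ^ μ
  have hB : ∀ t ∈ Icc 0 h, HasDerivAt B (m * ψ t ^ μ + m * b ^ μ * 1) t := fun t ht =>
    (((hasDerivAt_blowupSolution hμ.ne' (hψρ t ht).1).add
      ((hasDerivAt_id t).const_mul (m * b ^ μ))).sub_const _)
  have hfence : ∀ t ∈ Icc 0 h, ‖x t‖ ≤ B t := by
    refine image_norm_le_of_norm_deriv_right_lt_deriv_boundary'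
      (hx.1.mono (Icc_subset_Ici_iff (by linarith) |>.2 (by linarith)))
      (fun t ht => hx.hasDerivWithinAt_Ici hf hh ht.1) ?_
      (fun t ht => (hB t ht).continuousAt.continuousWithinAt)
      (fun t ht => (hB t (Ico_subset_Icc_self ht)).hasDerivWithinAt) ?_
    · simp only [B, hψ0, c]
      linarith [hxb 0 ⟨by linarith, le_rfl⟩]
    · intro t ht hxt
      have hBψ : B t < ψ t := by
        have := mul_lt_mul_of_pos_left ht.2 (mul_pos hm hbμ)
        simp only [B]; linarith
      have hdelay := rpow_le_rpow (norm_nonneg _)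
        (hxb (t - h) ⟨by linarith [ht.1], by linarith [ht.2]⟩) (by linarith : 0 ≤ μ)
      have hnow := rpow_lt_rpow (norm_nonneg _) (hxt ▸ hBψ) (by linarith : 0 < μ)
      nlinarith [hfb (x t) (x (t - h))]
  intro t ht
  rcases le_or_gt t 0 with ht0 | ht0
  · calc ‖x t‖ ≤ b := hxb t ⟨ht.1, ht0⟩
      _ ≤ ψ 0 := hψ0 ▸ hbc
      _ < ρ := (hψρ 0 ⟨le_rfl, hh⟩).2
  · calc ‖x t‖ ≤ B t := hfence t ⟨ht0.le, ht.2⟩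
      _ ≤ ψ t := by
          have := mul_le_mul_of_nonneg_left ht.2 (mul_pos hm hbμ).le
          simp only [B]; linarith
      _ < ρ := (hψρ t ⟨ht0.le, ht.2⟩).2

end IsDelaySolution

section InnerProduct

variable {E : Type*} [NormedAddCommGroup E] [InnerProductSpace ℝ E] [CompleteSpace E]

theorem HasDerivAt.comp_gradient {V : E → ℝ} {x : ℝ → E} {x' : E} {t : ℝ}
    (hV : DifferentiableAt ℝ V (x t)) (hx : HasDerivAt x x' t) :
    HasDerivAt (fun s => V (x s)) ⟪gradient V (x t), x'⟫ t := by
  have := hV.hasGradientAt.hasFDerivAt.comp_hasDerivAt t hx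
  rw [InnerProductSpace.toDual_apply_apply] at this
  exact this

theorem inner_gradient_le_add {V : E → ℝ} {f : E × E → E} {w k₂ γ μ : ℝ}
    (hgrad : ∀ y, ‖gradient V y‖ ≤ k₂ * ‖y‖ ^ (γ - 1))
    (hdV : ∀ y, ⟪gradient V y, f (y, y)⟫ ≤ -w * ‖y‖ ^ (γ + μ - 1)) (y z : E) :
    ⟪gradient V y, f (y, z)⟫ ≤
      -w * ‖y‖ ^ (γ + μ - 1) + k₂ * ‖y‖ ^ (γ - 1) * ‖f (y, z) - f (y, y)‖ := by
  have hsplit : f (y, z) = f (y, y) + (f (y, z) - f (y, y)) := by abel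
  rw [hsplit, inner_add_right, ← hsplit]
  gcongr
  · exact hdV y
  · exact (real_inner_le_norm _ _).trans (mul_le_mul_of_nonneg_right (hgrad y) (norm_nonneg _))

theorem IsDelaySolution.inner_gradient_le {f : E × E → E} {V : E → ℝ} {x : ℝ → E}
    {h m m₂ μ γ k₂ w R t : ℝ} (hx : IsDelaySolution f h x) (hf : Differentiable ℝ f)
    (hfb : ∀ y z : E, ‖f (y, z)‖ ≤ m * (‖y‖ ^ μ + ‖z‖ ^ μ))
    (hfy : ∀ y z : E,
      ‖fderiv ℝ (fun z' => f (y, z')) z‖ ≤ m₂ * (‖y‖ ^ (μ - 1) + ‖z‖ ^ (μ - 1)))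
    (hgrad : ∀ y, ‖gradient V y‖ ≤ k₂ * ‖y‖ ^ (γ - 1))
    (hdV : ∀ y, ⟪gradient V y, f (y, y)⟫ ≤ -w * ‖y‖ ^ (γ + μ - 1))
    (hm : 0 ≤ m) (hm₂ : 0 ≤ m₂) (hμ : 1 ≤ μ) (hh : 0 ≤ h) (ht : h < t)
    (hR : ∀ s ∈ Icc (t - 2 * h) t, ‖x s‖ ≤ R) :
    ⟪gradient V (x t), f (x t, x (t - h))⟫ ≤
      -w * ‖x t‖ ^ (γ + μ - 1) + 4 * h * m * m₂ * k₂ * R ^ (2 * μ - 1) * ‖x t‖ ^ (γ - 1) := by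
  have hxt : ‖x t‖ ≤ R := hR t ⟨by linarith, le_rfl⟩
  have hR0 : 0 ≤ R := (norm_nonneg _).trans hxt
  have hΔf : ‖f (x t, x (t - h)) - f (x t, x t)‖ ≤ 2 * m₂ * R ^ (μ - 1) * (2 * m * R ^ μ * h) := by
    refine (norm_sub_le_of_norm_fderiv_snd_le hf hfy hm₂ (by linarith) hxt
      (hR (t - h) ⟨by linarith, by linarith⟩) hxt).trans ?_
    rw [norm_sub_rev]
    exact mul_le_mul_of_nonneg_left (hx.norm_sub_delay_le hfb hm (by linarith) hh ht hR)
      (by positivity)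
  have hpow : R ^ (2 * μ - 1) = R ^ (μ - 1) * R ^ μ := by
    rw [← rpow_add' hR0 (by linarith)]; ring_nf
  calc ⟪gradient V (x t), f (x t, x (t - h))⟫
      ≤ -w * ‖x t‖ ^ (γ + μ - 1) + k₂ * ‖x t‖ ^ (γ - 1) * ‖f (x t, x (t - h)) - f (x t, x t)‖ :=
        inner_gradient_le_add hgrad hdV _ _
    _ ≤ -w * ‖x t‖ ^ (γ + μ - 1) +
          k₂ * ‖x t‖ ^ (γ - 1) * (2 * m₂ * R ^ (μ - 1) * (2 * m * R ^ μ * h)) := by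
        gcongr
        exact (norm_nonneg _).trans (hgrad _)
    _ = _ := by rw [hpow]; ring

end InnerProduct

section Razumikhin

variable {E : Type*} [NormedAddCommGroup E] {V : E → ℝ} {V' : ℝ → ℝ} {x : ℝ → E}
  {h μ γ w C k₀ k₁ κ δ : ℝ}

theorem lyapunov_lt_of_razumikhin (hVlb : ∀ y, k₀ * ‖y‖ ^ γ ≤ V y)
    (hVub : ∀ y, V y ≤ k₁ * ‖y‖ ^ γ) (hcont : ContinuousOn (fun t => V (x t)) (Ici (-h)))
    (hderiv : ∀ t > h, HasDerivAt (fun s => V (x s)) (V' t) t)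
    (hdecr : ∀ t > h, ∀ R, (∀ s ∈ Icc (t - 2 * h) t, ‖x s‖ ≤ R) →
      V' t ≤ -w * ‖x t‖ ^ (γ + μ - 1) + C * R ^ (2 * μ - 1) * ‖x t‖ ^ (γ - 1))
    (hh : 0 ≤ h) (hμ : 1 ≤ μ) (hγ : 1 ≤ γ) (hw : 0 ≤ w) (hC : 0 ≤ C) (hk₀ : 0 < k₀)
    (hk₁ : 0 < k₁) (hκ : 0 < κ) (hκγ : k₁ * κ ^ γ = k₀) (hδ : 0 < δ)
    (hgap : C * δ ^ (μ - 1) < w * κ ^ μ) (hinit : ∀ t ∈ Icc (-h) h, ‖x t‖ < κ * δ) :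
    ∀ t ≥ -h, V (x t) < k₀ * δ ^ γ := by
  have hκδ : 0 < κ * δ := mul_pos hκ hδ
  have hlevel : k₁ * (κ * δ) ^ γ = k₀ * δ ^ γ := by rw [mul_rpow hκ.le hδ.le, ← mul_assoc, hκγ]
  refine forall_lt_of_hasDerivAt_neg_at_first_hit (by linarith) hcont (fun t ht => ?_) hderiv ?_
  · rw [← hlevel]
    exact (hVub _).trans_lt (mul_lt_mul_of_pos_left
      (rpow_lt_rpow (norm_nonneg _) (hinit t ht) (by linarith)) hk₁)
  intro t ht hVt hbefore
  have hR : ∀ s ∈ Icc (t - 2 * h) t, ‖x s‖ ≤ δ := fun s hs =>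
    le_of_mul_rpow_le_mul_rpow hk₀ (norm_nonneg _) hδ.le (by linarith)
      ((hVlb _).trans (hbefore s ⟨by linarith [hs.1], hs.2⟩))
  have hr : κ * δ ≤ ‖x t‖ :=
    le_of_mul_rpow_le_mul_rpow hk₁ hκδ.le (norm_nonneg _) (by linarith)
      (hlevel ▸ hVt ▸ hVub (x t))
  have hgapδ := mul_rpow_two_mul_sub_one_lt hC hμ hκ hδ le_rfl hgap
  calc V' t ≤ _ := hdecr t ht δ hR
    _ ≤ _ := neg_mul_rpow_add_mul_rpow_le hw hκδ hr hγ (by linarith) hgapδ.le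
    _ < 0 := neg_neg_of_pos (mul_pos (rpow_pos_of_pos hκδ _) (sub_pos.2 hgapδ))

theorem eventually_lyapunov_lt_of_razumikhin (hV0 : ∀ y, 0 ≤ V y)
    (hVub : ∀ y, V y ≤ k₁ * ‖y‖ ^ γ) (hcont : ContinuousOn (fun t => V (x t)) (Ici (-h)))
    (hderiv : ∀ t > h, HasDerivAt (fun s => V (x s)) (V' t) t)
    (hdecr : ∀ t > h, ∀ R, (∀ s ∈ Icc (t - 2 * h) t, ‖x s‖ ≤ R) →
      V' t ≤ -w * ‖x t‖ ^ (γ + μ - 1) + C * R ^ (2 * μ - 1) * ‖x t‖ ^ (γ - 1))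
    (hh : 0 ≤ h) (hμ : 0 ≤ μ) (hγ : 1 ≤ γ) (hw : 0 ≤ w) (hk₁ : 0 < k₁) {R r : ℝ} (hr : 0 < r)
    (hRr : C * R ^ (2 * μ - 1) < w * r ^ μ) (hbound : ∀ᶠ t in atTop, ‖x t‖ ≤ R) :
    ∀ᶠ t in atTop, V (x t) < k₁ * r ^ γ := by
  obtain ⟨T₀, hT₀⟩ := eventually_atTop.1 hbound
  have hT : ∀ {t}, max (T₀ + 2 * h) h < t → T₀ + 2 * h < t ∧ h < t := fun ht =>
    ⟨(le_max_left _ _).trans_lt ht, (le_max_right _ _).trans_lt ht⟩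
  refine eventually_lt_of_hasDerivAt_le_neg
    (mul_pos (rpow_pos_of_pos hr (γ - 1)) (sub_pos.2 hRr))
    (hcont.mono (Ici_subset_Ici.2 (by linarith [le_max_right (T₀ + 2 * h) h])))
    (fun t _ => hV0 _) (fun t ht => hderiv t (hT ht).2) fun t ht hVt => ?_
  have hrx : r ≤ ‖x t‖ :=
    le_of_mul_rpow_le_mul_rpow hk₁ hr.le (norm_nonneg _) (by linarith) (hVt.trans (hVub _))
  exact (hdecr t (hT ht).2 R fun s hs => hT₀ s (by linarith [hs.1, (hT ht).1])).trans
    (neg_mul_rpow_add_mul_rpow_le hw hr hrx hγ hμ hRr.le)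

theorem exists_lower_level_of_razumikhin (hVlb : ∀ y, k₀ * ‖y‖ ^ γ ≤ V y)
    (hVub : ∀ y, V y ≤ k₁ * ‖y‖ ^ γ) (hcont : ContinuousOn (fun t => V (x t)) (Ici (-h)))
    (hderiv : ∀ t > h, HasDerivAt (fun s => V (x s)) (V' t) t)
    (hdecr : ∀ t > h, ∀ R, (∀ s ∈ Icc (t - 2 * h) t, ‖x s‖ ≤ R) →
      V' t ≤ -w * ‖x t‖ ^ (γ + μ - 1) + C * R ^ (2 * μ - 1) * ‖x t‖ ^ (γ - 1))
    (hh : 0 ≤ h) (hμ : 1 ≤ μ) (hγ : 1 ≤ γ) (hw : 0 ≤ w) (hC : 0 ≤ C) (hk₀ : 0 < k₀)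
    (hk₁ : 0 < k₁) (hκ : 0 < κ) (hκγ : k₁ * κ ^ γ = k₀) (hδ : 0 < δ)
    (hgap : C * δ ^ (μ - 1) < w * κ ^ μ) {L : ℝ} (hL : 0 < L) (hLδ : L ≤ k₀ * δ ^ γ) :
    ∃ U > L, ∃ ℓ < L, (∀ᶠ t in atTop, V (x t) < U) → ∀ᶠ t in atTop, V (x t) < ℓ := by
  -- `L = k₀ R₀ ^ γ = k₁ (κ R₀) ^ γ`; radii `R > R₀` and `r < κ R₀` close to these still give a
  -- uniformly negative estimate
  set R₀ := (L / k₀) ^ γ⁻¹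
  have hR₀ : 0 < R₀ := rpow_pos_of_pos (div_pos hL hk₀) _
  have hLR₀ : k₀ * R₀ ^ γ = L := by
    rw [← rpow_mul (div_pos hL hk₀).le, inv_mul_cancel₀ (by linarith), rpow_one]
    field_simp
  have hR₀δ : R₀ ≤ δ := le_of_mul_rpow_le_mul_rpow hk₀ hR₀.le hδ.le (by linarith) (hLR₀ ▸ hLδ)
  obtain ⟨R, hR₀R, r, hr, hRr⟩ :=
    exists_mul_rpow_lt_of_mul_rpow_lt hR₀ hκ (mul_rpow_two_mul_sub_one_lt hC hμ hκ hR₀ hR₀δ hgap)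
  refine ⟨k₀ * R ^ γ, ?_, k₁ * r ^ γ, ?_, fun hU => ?_⟩
  · rw [← hLR₀]
    exact mul_lt_mul_of_pos_left (rpow_lt_rpow hR₀.le hR₀R (by linarith)) hk₀
  · rw [← hLR₀, ← hκγ, mul_assoc, ← mul_rpow hκ.le hR₀.le]
    exact mul_lt_mul_of_pos_left (rpow_lt_rpow hr.1.le hr.2 (by linarith)) hk₁
  exact eventually_lyapunov_lt_of_razumikhin
    (fun y => (mul_nonneg hk₀.le (rpow_nonneg (norm_nonneg y) γ)).trans (hVlb y)) hVub hcont
    hderiv hdecr hh (by linarith) hγ hw hk₁ hr.1 hRr (hU.mono fun t ht =>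
      le_of_mul_rpow_le_mul_rpow hk₀ (norm_nonneg _) (hR₀.trans hR₀R).le (by linarith)
        ((hVlb _).trans ht.le))

theorem tendsto_lyapunov_zero_of_razumikhin (hVlb : ∀ y, k₀ * ‖y‖ ^ γ ≤ V y)
    (hVub : ∀ y, V y ≤ k₁ * ‖y‖ ^ γ) (hcont : ContinuousOn (fun t => V (x t)) (Ici (-h)))
    (hderiv : ∀ t > h, HasDerivAt (fun s => V (x s)) (V' t) t)
    (hdecr : ∀ t > h, ∀ R, (∀ s ∈ Icc (t - 2 * h) t, ‖x s‖ ≤ R) →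
      V' t ≤ -w * ‖x t‖ ^ (γ + μ - 1) + C * R ^ (2 * μ - 1) * ‖x t‖ ^ (γ - 1))
    (hh : 0 ≤ h) (hμ : 1 ≤ μ) (hγ : 1 ≤ γ) (hw : 0 ≤ w) (hC : 0 ≤ C) (hk₀ : 0 < k₀)
    (hk₁ : 0 < k₁) (hκ : 0 < κ) (hκγ : k₁ * κ ^ γ = k₀) (hδ : 0 < δ)
    (hgap : C * δ ^ (μ - 1) < w * κ ^ μ) (hbound : ∀ t ≥ 0, V (x t) ≤ k₀ * δ ^ γ) :
    Tendsto (fun t => V (x t)) atTop (𝓝 0) := by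
  have hV0 : ∀ t, 0 ≤ V (x t) := fun t =>
    (mul_nonneg hk₀.le (rpow_nonneg (norm_nonneg (x t)) γ)).trans (hVlb (x t))
  have hbdd : IsBoundedUnder (· ≤ ·) atTop fun t => V (x t) :=
    isBoundedUnder_of_eventually_le (eventually_atTop.2 ⟨0, hbound⟩)
  have hbdd' : IsBoundedUnder (· ≥ ·) atTop fun t => V (x t) :=
    isBoundedUnder_of_eventually_ge (Eventually.of_forall hV0)
  refine tendsto_of_le_liminf_of_limsup_le
    (le_liminf_of_le hbdd.isCoboundedUnder_ge (Eventually.of_forall hV0)) ?_ hbdd hbdd'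
  by_contra! hL
  obtain ⟨U, hU, ℓ, hℓ, hdescent⟩ := exists_lower_level_of_razumikhin hVlb hVub hcont hderiv
    hdecr hh hμ hγ hw hC hk₀ hk₁ hκ hκγ hδ hgap hL
    (limsup_le_of_le hbdd'.isCoboundedUnder_le (eventually_atTop.2 ⟨0, hbound⟩))
  obtain ⟨t, hlt, hgt⟩ := ((frequently_lt_of_lt_limsup hbdd'.isCoboundedUnder_le hℓ).and_eventually
    (hdescent (eventually_lt_of_limsup_lt hU hbdd))).exists
  exact lt_asymm hlt hgt

theorem tendsto_zero_of_lyapunov_tendsto_zero {l : Filter ℝ} (hVlb : ∀ y, k₀ * ‖y‖ ^ γ ≤ V y)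
    (hk₀ : 0 < k₀) (hγ : 0 < γ) (hV : Tendsto (fun t => V (x t)) l (𝓝 0)) :
    Tendsto x l (𝓝 0) := by
  rw [tendsto_zero_iff_norm_tendsto_zero]
  have hlim := (hV.div_const k₀).rpow_const (p := γ⁻¹) (Or.inr (inv_nonneg.2 hγ.le))
  rw [zero_div, zero_rpow (inv_ne_zero hγ.ne')] at hlim
  refine squeeze_zero (fun t => norm_nonneg _) (fun t => ?_) hlim
  rw [← rpow_rpow_inv (norm_nonneg (x t)) hγ.ne']
  exact rpow_le_rpow (by positivity) ((le_div_iff₀ hk₀).2 (by linarith [hVlb (x t)]))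
    (inv_nonneg.2 hγ.le)

theorem razumikhin_attraction (hVlb : ∀ y, k₀ * ‖y‖ ^ γ ≤ V y)
    (hVub : ∀ y, V y ≤ k₁ * ‖y‖ ^ γ) (hcont : ContinuousOn (fun t => V (x t)) (Ici (-h)))
    (hderiv : ∀ t > h, HasDerivAt (fun s => V (x s)) (V' t) t)
    (hdecr : ∀ t > h, ∀ R, (∀ s ∈ Icc (t - 2 * h) t, ‖x s‖ ≤ R) →
      V' t ≤ -w * ‖x t‖ ^ (γ + μ - 1) + C * R ^ (2 * μ - 1) * ‖x t‖ ^ (γ - 1))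
    (hh : 0 ≤ h) (hμ : 1 ≤ μ) (hγ : 1 ≤ γ) (hw : 0 ≤ w) (hC : 0 ≤ C) (hk₀ : 0 < k₀)
    (hk₁ : 0 < k₁) (hκ : 0 < κ) (hκγ : k₁ * κ ^ γ = k₀) (hδ : 0 < δ)
    (hgap : C * δ ^ (μ - 1) < w * κ ^ μ) (hinit : ∀ t ∈ Icc (-h) h, ‖x t‖ < κ * δ) :
    (∀ t ≥ 0, ‖x t‖ < δ) ∧ Tendsto x atTop (𝓝 0) := by
  have hinv := lyapunov_lt_of_razumikhin hVlb hVub hcont hderiv hdecr hh hμ hγ hw hC hk₀ hk₁ hκ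
    hκγ hδ hgap hinit
  refine ⟨fun t ht => lt_of_mul_rpow_lt_mul_rpow hk₀ (norm_nonneg _) hδ.le (by linarith)
    ((hVlb _).trans_lt (hinv t (by linarith))), ?_⟩
  exact tendsto_zero_of_lyapunov_tendsto_zero hVlb hk₀ (by linarith)
    (tendsto_lyapunov_zero_of_razumikhin hVlb hVub hcont hderiv hdecr hh hμ hγ hw hC hk₀ hk₁ hκ
      hκγ hδ hgap fun t ht => (hinv t (by linarith)).le)

end Razumikhin

theorem le_of_forall_mul_norm_rpow_le {E : Type*} [NormedAddCommGroup E] [Nontrivial E]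
    {k₀ k₁ γ : ℝ} (hk : ∀ y : E, k₀ * ‖y‖ ^ γ ≤ k₁ * ‖y‖ ^ γ) : k₀ ≤ k₁ := by
  obtain ⟨y, hy⟩ := exists_ne (0 : E)
  exact le_of_mul_le_mul_right (hk y) (rpow_pos_of_pos (norm_pos_iff.2 hy) γ)

theorem exists_norm_le_of_iSup_lt {E : Type*} [NormedAddCommGroup E] {φ : ℝ → E} {a c Δ : ℝ}
    (hφ : ContinuousOn φ (Icc a c)) (hΔ : 0 < Δ) (hsup : ⨆ s : Icc a c, ‖φ s‖ < Δ) :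
    ∃ b ∈ Ioo 0 Δ, ∀ θ ∈ Icc a c, ‖φ θ‖ ≤ b :=
  ⟨max (⨆ s : Icc a c, ‖φ s‖) (Δ / 2),
    ⟨(half_pos hΔ).trans_le (le_max_right _ _), max_lt hsup (half_lt_self hΔ)⟩,
    fun θ hθ => (le_ciSup (f := fun s : Icc a c => ‖φ s‖)
      (by simpa only [image_eq_range] using isCompact_Icc.bddAbove_image hφ.norm) ⟨θ, hθ⟩).trans
      (le_max_left _ _)⟩

theorem four_mul_rpow_div_le {h m m₂ k₀ k₁ k₂ μ γ α k₄ : ℝ} (hh : 0 < h) (hm : 0 < m)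
    (hm₂ : 0 < m₂) (hk₂ : 0 < k₂) (hk₀ : 0 < k₀) (hk01 : k₀ ≤ k₁) (hα : 1 < α) (hμ : 1 < μ)
    (hγ : 0 < γ)
    (hk₄ : k₄ = 2 * h * m * m₂ * k₂ * (α * k₁ / k₀) ^ (μ / γ) *
      (1 + (α * k₁ / k₀) ^ ((μ - 1) / γ))) :
    4 * h * m * m₂ * k₂ * (k₁ / k₀) ^ (μ / γ) ≤ k₄ := by
  have hk₁ : 0 < k₁ := hk₀.trans_le hk01
  have hkα : k₁ / k₀ ≤ α * k₁ / k₀ := by gcongr; nlinarith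
  have hone : 1 ≤ α * k₁ / k₀ := (one_le_div hk₀ |>.2 hk01).trans hkα
  have h1 : (k₁ / k₀) ^ (μ / γ) ≤ (α * k₁ / k₀) ^ (μ / γ) :=
    rpow_le_rpow (by positivity) hkα (by positivity)
  have h2 : 1 ≤ (α * k₁ / k₀) ^ ((μ - 1) / γ) := one_le_rpow hone (div_nonneg (by linarith) hγ.le)
  rw [hk₄]
  calc 4 * h * m * m₂ * k₂ * (k₁ / k₀) ^ (μ / γ)
      ≤ 4 * h * m * m₂ * k₂ * (α * k₁ / k₀) ^ (μ / γ) := by gcongr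
    _ = 2 * h * m * m₂ * k₂ * (α * k₁ / k₀) ^ (μ / γ) * (1 + 1) := by ring
    _ ≤ _ := by gcongr

theorem mul_rpow_sub_one_lt_of_lt_rpow_div {h m m₂ k₀ k₁ k₂ w μ γ α k₄ κ δ : ℝ} (hh : 0 < h)
    (hm : 0 < m) (hm₂ : 0 < m₂) (hk₀ : 0 < k₀) (hk₂ : 0 < k₂) (hw : 0 < w) (hk01 : k₀ ≤ k₁)
    (hα : 1 < α) (hμ : 1 < μ) (hγ : 0 < γ)
    (hk₄ : k₄ = 2 * h * m * m₂ * k₂ * (α * k₁ / k₀) ^ (μ / γ) *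
      (1 + (α * k₁ / k₀) ^ ((μ - 1) / γ)))
    (hκ : κ = (k₀ / k₁) ^ (1 / γ)) (hδ : 0 < δ) (hδH : δ < (w / k₄) ^ (1 / (μ - 1))) :
    4 * h * m * m₂ * k₂ * δ ^ (μ - 1) < w * κ ^ μ := by
  have hk₁ : 0 < k₁ := hk₀.trans_le hk01
  have hk₄ := four_mul_rpow_div_le hh hm hm₂ hk₂ hk₀ hk01 hα hμ hγ hk₄
  have hk₄0 : 0 < k₄ := lt_of_lt_of_le (by positivity) hk₄
  have hδk₄ : k₄ * δ ^ (μ - 1) < w := by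
    have := rpow_lt_rpow hδ.le hδH (by linarith : 0 < μ - 1)
    rw [← rpow_mul (by positivity), one_div_mul_cancel (by linarith), rpow_one,
      lt_div_iff₀ hk₄0] at this
    linarith
  have hκμ : (k₁ / k₀) ^ (μ / γ) * κ ^ μ = 1 := by
    rw [hκ, ← rpow_mul (by positivity), one_div_mul_eq_div, ← mul_rpow (by positivity)
      (by positivity), div_mul_div_comm, mul_comm k₁ k₀, div_self (by positivity), one_rpow]
  have hκ0 : 0 < κ ^ μ := rpow_pos_of_pos (hκ ▸ rpow_pos_of_pos (div_pos hk₀ hk₁) _) _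
  calc 4 * h * m * m₂ * k₂ * δ ^ (μ - 1)
      = 4 * h * m * m₂ * k₂ * (k₁ / k₀) ^ (μ / γ) * δ ^ (μ - 1) * κ ^ μ := by
        linear_combination (-(4 * h * m * m₂ * k₂ * δ ^ (μ - 1))) * hκμ
    _ ≤ k₄ * δ ^ (μ - 1) * κ ^ μ := by gcongr
    _ < w * κ ^ μ := mul_lt_mul_of_pos_right hδk₄ hκ0

theorem attraction_region_LR_general
    {n : ℕ} (hn : 1 ≤ n)
    (h μ : ℝ) (hh : 0 < h) (hμ : 1 < μ)
    (f : EuclideanSpace ℝ (Fin n) × EuclideanSpace ℝ (Fin n) → EuclideanSpace ℝ (Fin n))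
    (hf : ContDiff ℝ 1 f)
    (m m₂ : ℝ) (hm : 0 < m) (hm₂ : 0 < m₂)
    (hfb : ∀ x y : EuclideanSpace ℝ (Fin n), ‖f (x, y)‖ ≤ m * (‖x‖ ^ μ + ‖y‖ ^ μ))
    (hfy : ∀ x y : EuclideanSpace ℝ (Fin n),
      ‖fderiv ℝ (fun y' => f (x, y')) y‖ ≤ m₂ * (‖x‖ ^ (μ - 1) + ‖y‖ ^ (μ - 1)))
    (γ : ℝ) (hγ : 2 ≤ γ)
    (V : EuclideanSpace ℝ (Fin n) → ℝ) (hV : ContDiff ℝ 1 V)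
    (k₀ k₁ k₂ w : ℝ) (hk₀ : 0 < k₀) (hk₁ : 0 < k₁) (hk₂ : 0 < k₂) (hw : 0 < w)
    (hVlb : ∀ x : EuclideanSpace ℝ (Fin n), k₀ * ‖x‖ ^ γ ≤ V x)
    (hVub : ∀ x : EuclideanSpace ℝ (Fin n), V x ≤ k₁ * ‖x‖ ^ γ)
    (hgrad : ∀ x : EuclideanSpace ℝ (Fin n), ‖gradient V x‖ ≤ k₂ * ‖x‖ ^ (γ - 1))
    (hdV : ∀ x : EuclideanSpace ℝ (Fin n),
      ⟪gradient V x, f (x, x)⟫ ≤ -w * ‖x‖ ^ (γ + μ - 1))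
    (α : ℝ) (hα : 1 < α)
    (k₄ H δ κ K Δ : ℝ)
    (hk₄ : k₄ = 2 * h * m * m₂ * k₂ * (α * k₁ / k₀) ^ (μ / γ) *
      (1 + (α * k₁ / k₀) ^ ((μ - 1) / γ)))
    (hH : H = (w / k₄) ^ (1 / (μ - 1)))
    (hδ : δ ∈ Set.Ioo 0 H)
    (hκ : κ = (k₀ / k₁) ^ (1 / γ))
    (hK : K = (1 + (μ - 1) * m * h * (κ * δ) ^ (μ - 1)) ^ (1 / (μ - 1)))
    (hΔpos : 0 < Δ) (hΔ : Δ + m * h * Δ ^ μ = κ * δ / K)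
    (φ x : ℝ → EuclideanSpace ℝ (Fin n))
    (hφc : ContinuousOn φ (Set.Icc (-h) 0))
    (hxc : ContinuousOn x (Set.Ici (-h)))
    (hxφ : ∀ θ ∈ Set.Icc (-h) (0:ℝ), x θ = φ θ)
    (hxd : ∀ t > (0:ℝ), HasDerivAt x (f (x t, x (t - h))) t)
    (hφΔ : (⨆ θ : Set.Icc (-h) (0:ℝ), ‖φ θ.1‖) < Δ) :
    (∀ t ≥ (0:ℝ), ‖x t‖ < δ) ∧ Filter.Tendsto x Filter.atTop (nhds 0) := by
  obtain ⟨hδ, hδH⟩ := hδ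
  have hsol : IsDelaySolution f h x := ⟨hxc, hxd⟩
  have : Nontrivial (EuclideanSpace ℝ (Fin n)) :=
    Module.nontrivial_of_finrank_pos (by rw [finrank_euclideanSpace_fin]; omega)
  have hk01 : k₀ ≤ k₁ := le_of_forall_mul_norm_rpow_le fun y => (hVlb y).trans (hVub y)
  have hκ0 : 0 < κ := hκ ▸ rpow_pos_of_pos (div_pos hk₀ hk₁) _
  have hκγ : k₁ * κ ^ γ = k₀ := by
    rw [hκ, ← rpow_mul (div_pos hk₀ hk₁).le, one_div_mul_cancel (by linarith), rpow_one]
    field_simp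
  have hgap := mul_rpow_sub_one_lt_of_lt_rpow_div hh hm hm₂ hk₀ hk₂ hw hk01 hα hμ (by linarith)
    hk₄ hκ hδ (hH ▸ hδH)
  obtain ⟨b, hb, hφb⟩ := exists_norm_le_of_iSup_lt hφc hΔpos hφΔ
  have hinit := hsol.norm_lt_of_initial_le hf.continuous hfb hm hμ hh.le hb.1
    (fun θ hθ => hxφ θ hθ ▸ hφb θ hθ) (mul_pos hκ0 hδ) (by
      rw [← hK, ← hΔ]
      linarith [hb.2, mul_lt_mul_of_pos_left (rpow_lt_rpow hb.1.le hb.2 (by linarith : 0 < μ))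
        (mul_pos hm hh)])
  refine razumikhin_attraction hVlb hVub (hV.continuous.comp_continuousOn hxc)
    (fun t ht => HasDerivAt.comp_gradient (hV.differentiable one_ne_zero _) (hxd t (hh.trans ht)))
    (fun t ht R hR => hsol.inner_gradient_le (hf.differentiable one_ne_zero) hfb hfy hgrad hdV
      hm.le hm₂.le hμ.le hh.le ht hR)
    hh.le hμ.le (by linarith) hw.le (by positivity) hk₀ hk₁ hκ0 hκγ hδ hgap hinit

/-- Razumikhin-based estimate of the domain of attraction (Theorem 2 with explicit constants):
initial functions with `‖φ‖_h < Δ` yield solutions staying in the ball of radius `δ`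
and tending to zero. -/
theorem attraction_region_LR
    {n : ℕ} (hn : 1 ≤ n)
    (h μ : ℝ) (hh : 0 < h) (hμ : 1 < μ)
    (f : EuclideanSpace ℝ (Fin n) × EuclideanSpace ℝ (Fin n) → EuclideanSpace ℝ (Fin n))
    (hf : ContDiff ℝ 1 f)
    (hhom : ∀ c > (0:ℝ), ∀ x y : EuclideanSpace ℝ (Fin n),
      f (c • x, c • y) = (c ^ μ) • f (x, y))
    (m m₂ : ℝ) (hm : 0 < m) (hm₂ : 0 < m₂)
    (hfb : ∀ x y : EuclideanSpace ℝ (Fin n), ‖f (x, y)‖ ≤ m * (‖x‖ ^ μ + ‖y‖ ^ μ))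
    (hfy : ∀ x y : EuclideanSpace ℝ (Fin n),
      ‖fderiv ℝ (fun y' => f (x, y')) y‖ ≤ m₂ * (‖x‖ ^ (μ - 1) + ‖y‖ ^ (μ - 1)))
    (γ : ℝ) (hγ : 2 ≤ γ)
    (V : EuclideanSpace ℝ (Fin n) → ℝ) (hV : ContDiff ℝ 1 V)
    (k₀ k₁ k₂ w : ℝ) (hk₀ : 0 < k₀) (hk₁ : 0 < k₁) (hk₂ : 0 < k₂) (hw : 0 < w)
    (hVlb : ∀ x : EuclideanSpace ℝ (Fin n), k₀ * ‖x‖ ^ γ ≤ V x)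
    (hVub : ∀ x : EuclideanSpace ℝ (Fin n), V x ≤ k₁ * ‖x‖ ^ γ)
    (hgrad : ∀ x : EuclideanSpace ℝ (Fin n), ‖gradient V x‖ ≤ k₂ * ‖x‖ ^ (γ - 1))
    (hdV : ∀ x : EuclideanSpace ℝ (Fin n),
      ⟪gradient V x, f (x, x)⟫ ≤ -w * ‖x‖ ^ (γ + μ - 1))
    (α : ℝ) (hα : 1 < α)
    (k₄ H δ κ K Δ : ℝ)
    (hk₄ : k₄ = 2 * h * m * m₂ * k₂ * (α * k₁ / k₀) ^ (μ / γ) *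
      (1 + (α * k₁ / k₀) ^ ((μ - 1) / γ)))
    (hH : H = (w / k₄) ^ (1 / (μ - 1)))
    (hδ : δ ∈ Set.Ioo 0 H)
    (hκ : κ = (k₀ / k₁) ^ (1 / γ))
    (hK : K = (1 + (μ - 1) * m * h * (κ * δ) ^ (μ - 1)) ^ (1 / (μ - 1)))
    (hΔpos : 0 < Δ) (hΔ : Δ + m * h * Δ ^ μ = κ * δ / K)
    (φ x : ℝ → EuclideanSpace ℝ (Fin n))
    (hφc : ContinuousOn φ (Set.Icc (-h) 0))
    (hxc : ContinuousOn x (Set.Ici (-h)))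
    (hxφ : ∀ θ ∈ Set.Icc (-h) (0:ℝ), x θ = φ θ)
    (hxd : ∀ t > (0:ℝ), HasDerivAt x (f (x t, x (t - h))) t)
    (hφΔ : (⨆ θ : Set.Icc (-h) (0:ℝ), ‖φ θ.1‖) < Δ) :
    (∀ t ≥ (0:ℝ), ‖x t‖ < δ) ∧ Filter.Tendsto x Filter.atTop (nhds 0) :=
  attraction_region_LR_general hn h μ hh hμ f hf m m₂ hm hm₂ hfb hfy γ hγ V hV k₀ k₁ k₂ w hk₀ hk₁
    hk₂ hw hVlb hVub hgrad hdV α hα k₄ H δ κ K Δ hk₄ hH hδ hκ hK hΔpos hΔ φ x hφc hxc hxφ hxd hφΔ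
end

section
/- Let χ > 0 be such that a₂ := w₁ − k₂ m χ^{2(γ−1)} > 0, set H₁ = (k₀/(h k₂ m (1 + χ^{−2μ})))^{1/(μ−1)}, let δ ∈ (0, H₁), and set a₁ = k₀ − h k₂ m (1 + χ^{−2μ}) δ^{μ−1}. Then for every continuous φ : [−h,0] → E with ‖φ‖_h ≤ δ one has v(φ) ≥ a₁‖φ(0)‖^γ + a₂ ∫_{−h}^{0} ‖φ(θ)‖^{γ+μ−1} dθ. -/
/-!
With `x = φ(0)`: `V(x) ≥ k₀‖x‖^γ` and the weight `w₁ + (h+θ)w₂` is at least `w₁`. The cross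
term is at least `-‖∇V(x)‖ ∫ ‖f(x, φ(θ))‖ ≥ -k₂ m ∫ ‖x‖^{γ-1} (‖x‖^μ + ‖φ(θ)‖^μ)`. The mixed
product `‖x‖^{γ-1} ‖y‖^μ` is split between the pure powers of degree `γ+μ-1` with the weights
`χ^{-2μ}` and `χ^{2(γ-1)}`; then `‖x‖^{γ+μ-1} ≤ δ^{μ-1} ‖x‖^γ` produces `a₁`, and the integral
part is paid for by `w₁`, leaving `a₂`.
-/

open Real Set RealInnerProductSpace

/-- Compare `a` with `t b`: the larger of the two carries the whole degree `p + q`. -/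
lemma rpow_mul_rpow_le_add {t : ℝ} (ht : 0 < t) {a b p q : ℝ} (ha : 0 ≤ a) (hb : 0 ≤ b)
    (hp : 0 ≤ p) (hq : 0 ≤ q) :
    a ^ p * b ^ q ≤ t ^ (-q) * a ^ (p + q) + t ^ p * b ^ (p + q) := by
  have hA : 0 ≤ t ^ (-q) * a ^ (p + q) := by positivity
  have hB : 0 ≤ t ^ p * b ^ (p + q) := by positivity
  rcases le_or_gt a (t * b) with hab | hab
  · have hle : a ^ p * b ^ q ≤ t ^ p * b ^ (p + q) :=
      calc a ^ p * b ^ q ≤ (t * b) ^ p * b ^ q := by gcongr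
        _ = t ^ p * b ^ (p + q) := by
          rw [mul_rpow ht.le hb, rpow_add_of_nonneg hb hp hq, mul_assoc]
    linarith
  · have hba : b ≤ t⁻¹ * a := by rw [inv_mul_eq_div, le_div_iff₀ ht]; linarith
    have hle : a ^ p * b ^ q ≤ t ^ (-q) * a ^ (p + q) :=
      calc a ^ p * b ^ q ≤ a ^ p * (t⁻¹ * a) ^ q := by gcongr
        _ = t ^ (-q) * a ^ (p + q) := by
          rw [mul_rpow (inv_nonneg.2 ht.le) ha, inv_rpow ht.le, ← rpow_neg ht.le,
            rpow_add_of_nonneg ha hp hq]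
          ring
    linarith

lemma rpow_mul_add_rpow_le {χ : ℝ} (hχ : 0 < χ) {a b p q : ℝ} (ha : 0 ≤ a) (hb : 0 ≤ b)
    (hp : 0 ≤ p) (hq : 0 ≤ q) :
    a ^ p * (a ^ q + b ^ q) ≤
      (1 + χ ^ (-(2 * q))) * a ^ (p + q) + χ ^ (2 * p) * b ^ (p + q) := by
  have hsplit := rpow_mul_rpow_le_add (rpow_pos_of_pos hχ 2) ha hb hp hq
  rw [← rpow_mul hχ.le, ← rpow_mul hχ.le, mul_neg] at hsplit
  rw [mul_add, ← rpow_add_of_nonneg ha hp hq]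
  linarith

lemma rpow_add_le_rpow_mul_rpow {x δ γ s : ℝ} (hx : 0 ≤ x) (hxδ : x ≤ δ) (hγ : 0 ≤ γ)
    (hs : 0 ≤ s) : x ^ (γ + s) ≤ δ ^ s * x ^ γ := by
  rw [rpow_add_of_nonneg hx hγ hs, mul_comm]
  gcongr

lemma norm_le_of_iSup_norm_le {E : Type*} [SeminormedAddCommGroup E] {a b δ : ℝ}
    {φ : ℝ → E} (hφ : ContinuousOn φ (Icc a b)) (hsup : (⨆ θ : Icc a b, ‖φ θ.1‖) ≤ δ) :
    ∀ θ ∈ Icc a b, ‖φ θ‖ ≤ δ := by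
  have hbdd : BddAbove (range fun θ : Icc a b => ‖φ θ.1‖) := by
    simpa only [image_eq_range] using (isCompact_Icc.image_of_continuousOn hφ.norm).bddAbove
  exact fun θ hθ => (le_ciSup hbdd ⟨θ, hθ⟩).trans hsup

lemma neg_integral_le_inner_integral {E : Type*} [NormedAddCommGroup E] [InnerProductSpace ℝ E]
    {a b : ℝ} (hab : a ≤ b) (u : E) {F : ℝ → E} {G : ℝ → ℝ}
    (hG : IntervalIntegrable G MeasureTheory.volume a b)
    (hFG : ∀ θ ∈ Ioc a b, ‖u‖ * ‖F θ‖ ≤ G θ) :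
    -∫ θ in a..b, G θ ≤ ⟪u, ∫ θ in a..b, F θ⟫ := by
  have hnorm : ‖u‖ * ‖∫ θ in a..b, F θ‖ ≤ ∫ θ in a..b, G θ := by
    rw [← norm_norm u, ← norm_smul, ← intervalIntegral.integral_smul]
    refine intervalIntegral.norm_integral_le_of_norm_le hab (.of_forall fun θ hθ => ?_) hG
    rw [norm_smul, norm_norm]
    exact hFG θ hθ
  linarith [neg_abs_le ⟪u, ∫ θ in a..b, F θ⟫, abs_real_inner_le_norm u (∫ θ in a..b, F θ)]

lemma mul_integral_le_integral_mul_of_le {a b c : ℝ} (hab : a ≤ b) {w g : ℝ → ℝ}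
    (hw : ContinuousOn w (Icc a b)) (hg : ContinuousOn g (Icc a b))
    (hcw : ∀ θ ∈ Icc a b, c ≤ w θ) (hg0 : ∀ θ ∈ Icc a b, 0 ≤ g θ) :
    c * ∫ θ in a..b, g θ ≤ ∫ θ in a..b, w θ * g θ := by
  rw [← intervalIntegral.integral_const_mul]
  have hIcc : uIcc a b = Icc a b := uIcc_of_le hab
  refine intervalIntegral.integral_mono_on hab ?_ ?_
    fun θ hθ => mul_le_mul_of_nonneg_right (hcw θ hθ) (hg0 θ hθ)
  · exact (hIcc ▸ continuousOn_const.mul hg).intervalIntegrable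
  · exact (hIcc ▸ hw.mul hg).intervalIntegrable

lemma neg_le_inner_integral_of_growth {E : Type*} [NormedAddCommGroup E]
    [InnerProductSpace ℝ E] {h μ m γ k₂ χ : ℝ} (hh : 0 ≤ h) (hμ : 0 ≤ μ)
    (hm : 0 ≤ m) (hγ : 1 ≤ γ) (hk₂ : 0 ≤ k₂) (hχ : 0 < χ) {x u : E}
    (hu : ‖u‖ ≤ k₂ * ‖x‖ ^ (γ - 1)) {φ F : ℝ → E} (hφ : ContinuousOn φ (Icc (-h) 0))
    (hF : ∀ θ, ‖F θ‖ ≤ m * (‖x‖ ^ μ + ‖φ θ‖ ^ μ)) :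
    -(h * k₂ * m * (1 + χ ^ (-(2 * μ))) * ‖x‖ ^ (γ + μ - 1) +
        k₂ * m * χ ^ (2 * (γ - 1)) * ∫ θ in (-h)..0, ‖φ θ‖ ^ (γ + μ - 1)) ≤
      ⟪u, ∫ θ in (-h)..0, F θ⟫ := by
  have hr : γ - 1 + μ = γ + μ - 1 := by ring
  have hIcc : uIcc (-h) 0 = Icc (-h) 0 := uIcc_of_le (by linarith)
  have hint : IntervalIntegrable (fun θ => ‖φ θ‖ ^ (γ + μ - 1)) MeasureTheory.volume (-h) 0 :=
    (hIcc ▸ hφ.norm.rpow_const fun _ _ => Or.inr (by linarith)).intervalIntegrable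
  have hpoint : ∀ θ, ‖u‖ * ‖F θ‖ ≤ k₂ * m * ((1 + χ ^ (-(2 * μ))) * ‖x‖ ^ (γ + μ - 1) +
      χ ^ (2 * (γ - 1)) * ‖φ θ‖ ^ (γ + μ - 1)) := fun θ =>
    calc ‖u‖ * ‖F θ‖ ≤ k₂ * ‖x‖ ^ (γ - 1) * (m * (‖x‖ ^ μ + ‖φ θ‖ ^ μ)) :=
          mul_le_mul hu (hF θ) (norm_nonneg _) (by positivity)
      _ = k₂ * m * (‖x‖ ^ (γ - 1) * (‖x‖ ^ μ + ‖φ θ‖ ^ μ)) := by ring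
      _ ≤ _ := by
          gcongr
          simpa only [hr] using rpow_mul_add_rpow_le hχ (norm_nonneg x) (norm_nonneg (φ θ))
            (by linarith : (0:ℝ) ≤ γ - 1) hμ
  have hbound := neg_integral_le_inner_integral (by linarith) u
    ((intervalIntegrable_const.add (hint.const_mul _)).const_mul _) fun θ _ => hpoint θ
  rw [intervalIntegral.integral_const_mul, intervalIntegral.integral_add intervalIntegrable_const
    (hint.const_mul _), intervalIntegral.integral_const, intervalIntegral.integral_const_mul,
    smul_eq_mul, sub_neg_eq_add] at hbound
  linear_combination hbound

theorem functional_lower_bound_general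
    {n : ℕ}
    (h μ : ℝ) (hh : 0 < h) (hμ : 1 < μ)
    (f : EuclideanSpace ℝ (Fin n) × EuclideanSpace ℝ (Fin n) → EuclideanSpace ℝ (Fin n))
    (m : ℝ) (hm : 0 < m)
    (hfb : ∀ x y : EuclideanSpace ℝ (Fin n), ‖f (x, y)‖ ≤ m * (‖x‖ ^ μ + ‖y‖ ^ μ))
    (γ : ℝ) (hγ : 2 ≤ γ)
    (V : EuclideanSpace ℝ (Fin n) → ℝ)
    (k₀ k₂ : ℝ) (hk₂ : 0 < k₂)
    (hVlb : ∀ x : EuclideanSpace ℝ (Fin n), k₀ * ‖x‖ ^ γ ≤ V x)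
    (hgrad : ∀ x : EuclideanSpace ℝ (Fin n), ‖gradient V x‖ ≤ k₂ * ‖x‖ ^ (γ - 1))
    (w₁ w₂ : ℝ) (hw₂ : 0 < w₂)
    (χ a₂ δ a₁ : ℝ)
    (hχ : 0 < χ)
    (ha₂ : a₂ = w₁ - k₂ * m * χ ^ (2 * (γ - 1)))
    (ha₁ : a₁ = k₀ - h * k₂ * m * (1 + χ ^ (-(2 * μ))) * δ ^ (μ - 1)) :
    ∀ φ : ℝ → EuclideanSpace ℝ (Fin n), ContinuousOn φ (Set.Icc (-h) 0) →
      (⨆ θ : Set.Icc (-h) (0:ℝ), ‖φ θ.1‖) ≤ δ →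
      a₁ * ‖φ 0‖ ^ γ + a₂ * ∫ θ in (-h)..0, ‖φ θ‖ ^ (γ + μ - 1) ≤
        V (φ 0) + ⟪gradient V (φ 0), ∫ θ in (-h)..0, f (φ 0, φ θ)⟫ +
          ∫ θ in (-h)..0, (w₁ + (h + θ) * w₂) * ‖φ θ‖ ^ (γ + μ - 1) := by
  intro φ hφ hsup
  have hφδ := norm_le_of_iSup_norm_le hφ hsup
  have hcross := neg_le_inner_integral_of_growth hh.le (by linarith) hm.le (by linarith) hk₂.le hχ
    (hgrad (φ 0)) hφ fun θ => hfb (φ 0) (φ θ)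
  have hpow : ‖φ 0‖ ^ (γ + μ - 1) ≤ δ ^ (μ - 1) * ‖φ 0‖ ^ γ := by
    rw [show γ + μ - 1 = γ + (μ - 1) by ring]
    exact rpow_add_le_rpow_mul_rpow (norm_nonneg _) (hφδ 0 ⟨by linarith, le_rfl⟩)
      (by linarith) (by linarith)
  have hweight := mul_integral_le_integral_mul_of_le (c := w₁) (w := fun θ => w₁ + (h + θ) * w₂)
    (g := fun θ => ‖φ θ‖ ^ (γ + μ - 1))
    (by linarith : -h ≤ 0) (by fun_prop) (hφ.norm.rpow_const fun _ _ => Or.inr (by linarith))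
    (fun θ hθ => le_add_of_nonneg_right (mul_nonneg (by linarith [hθ.1]) hw₂.le))
    fun θ _ => rpow_nonneg (norm_nonneg _) _
  have habsorb := mul_le_mul_of_nonneg_left hpow
    (by positivity : 0 ≤ h * k₂ * m * (1 + χ ^ (-(2 * μ))))
  rw [ha₁, ha₂]
  linarith [hVlb (φ 0)]

/-- Lemma 1: lower bound for the Lyapunov–Krasovskii functional `v`. -/
theorem functional_lower_bound
    {n : ℕ} (hn : 1 ≤ n)
    (h μ : ℝ) (hh : 0 < h) (hμ : 1 < μ)
    (f : EuclideanSpace ℝ (Fin n) × EuclideanSpace ℝ (Fin n) → EuclideanSpace ℝ (Fin n))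
    (hf : Continuous f)
    (hhom : ∀ c > (0:ℝ), ∀ x y : EuclideanSpace ℝ (Fin n),
      f (c • x, c • y) = (c ^ μ) • f (x, y))
    (m : ℝ) (hm : 0 < m)
    (hfb : ∀ x y : EuclideanSpace ℝ (Fin n), ‖f (x, y)‖ ≤ m * (‖x‖ ^ μ + ‖y‖ ^ μ))
    (γ : ℝ) (hγ : 2 ≤ γ)
    (V : EuclideanSpace ℝ (Fin n) → ℝ) (hV : ContDiff ℝ 1 V)
    (k₀ k₂ : ℝ) (hk₀ : 0 < k₀) (hk₂ : 0 < k₂)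
    (hVlb : ∀ x : EuclideanSpace ℝ (Fin n), k₀ * ‖x‖ ^ γ ≤ V x)
    (hgrad : ∀ x : EuclideanSpace ℝ (Fin n), ‖gradient V x‖ ≤ k₂ * ‖x‖ ^ (γ - 1))
    (w₁ w₂ : ℝ) (hw₁ : 0 < w₁) (hw₂ : 0 < w₂)
    (χ a₂ H₁ δ a₁ : ℝ)
    (hχ : 0 < χ)
    (ha₂ : a₂ = w₁ - k₂ * m * χ ^ (2 * (γ - 1))) (ha₂pos : 0 < a₂)
    (hH₁ : H₁ = (k₀ / (h * k₂ * m * (1 + χ ^ (-(2 * μ))))) ^ (1 / (μ - 1)))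
    (hδ : δ ∈ Set.Ioo 0 H₁)
    (ha₁ : a₁ = k₀ - h * k₂ * m * (1 + χ ^ (-(2 * μ))) * δ ^ (μ - 1)) :
    ∀ φ : ℝ → EuclideanSpace ℝ (Fin n), ContinuousOn φ (Set.Icc (-h) 0) →
      (⨆ θ : Set.Icc (-h) (0:ℝ), ‖φ θ.1‖) ≤ δ →
      a₁ * ‖φ 0‖ ^ γ + a₂ * ∫ θ in (-h)..0, ‖φ θ‖ ^ (γ + μ - 1) ≤
        V (φ 0) + ⟪gradient V (φ 0), ∫ θ in (-h)..0, f (φ 0, φ θ)⟫ +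
          ∫ θ in (-h)..0, (w₁ + (h + θ) * w₂) * ‖φ θ‖ ^ (γ + μ - 1) :=
  functional_lower_bound_general h μ hh hμ f m hm hfb γ hγ V k₀ k₂ hk₂ hVlb hgrad w₁ w₂ hw₂ χ a₂ δ
    a₁ hχ ha₂ ha₁
end

section
/- Set β = (2 k₂ m + w₁ + h w₂)·h. Then for every continuous φ : [−h,0] → E one has v(φ) ≤ k₁‖φ(0)‖^γ + β‖φ‖_h^{γ+μ−1}. -/
/-!
Put `M = ‖φ‖_h`. Every norm `‖φ θ‖` with `θ ∈ [-h, 0]` is at most `M`, so the growth bound gives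
`‖f(φ 0, φ θ)‖ ≤ 2mM^μ` and the cross term is at most `k₂M^{γ-1} · 2mM^μ h`, while the weight
`w₁ + (h + θ)w₂` is at most `w₁ + hw₂`; the three terms of `v(φ)` then add up to the bound.
-/

open Real Set RealInnerProductSpace

theorem IsCompact.le_ciSup_of_continuousOn {X : Type*} [TopologicalSpace X] {K : Set X}
    (hK : IsCompact K) {g : X → ℝ} (hg : ContinuousOn g K) {x : X} (hx : x ∈ K) :
    g x ≤ ⨆ y : K, g y := by
  refine le_ciSup (f := fun y : K => g y) ?_ ⟨x, hx⟩
  rw [← image_eq_range]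
  exact hK.bddAbove_image hg

section

variable {E : Type*} [NormedAddCommGroup E]

theorem norm_integral_le_of_growth [NormedSpace ℝ E] {f : E × E → E} {m μ M a b : ℝ}
    (hm : 0 ≤ m) (hμ : 0 ≤ μ) (hab : a ≤ b)
    (hfb : ∀ x y : E, ‖f (x, y)‖ ≤ m * (‖x‖ ^ μ + ‖y‖ ^ μ))
    {x : E} {φ : ℝ → E} (hx : ‖x‖ ≤ M) (hφ : ∀ θ ∈ Ioc a b, ‖φ θ‖ ≤ M) :
    ‖∫ θ in a..b, f (x, φ θ)‖ ≤ 2 * m * (b - a) * M ^ μ := by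
  have hbound : ∀ θ ∈ uIoc a b, ‖f (x, φ θ)‖ ≤ 2 * m * M ^ μ := by
    intro θ hθ
    rw [uIoc_of_le hab] at hθ
    calc ‖f (x, φ θ)‖ ≤ m * (‖x‖ ^ μ + ‖φ θ‖ ^ μ) := hfb _ _
      _ ≤ m * (M ^ μ + M ^ μ) := by gcongr; exact hφ θ hθ
      _ = 2 * m * M ^ μ := by ring
  calc ‖∫ θ in a..b, f (x, φ θ)‖ ≤ 2 * m * M ^ μ * |b - a| :=
        intervalIntegral.norm_integral_le_of_norm_le_const hbound
    _ = 2 * m * (b - a) * M ^ μ := by rw [abs_of_nonneg (sub_nonneg.2 hab)]; ring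

theorem inner_le_rpow_of_norm_le [InnerProductSpace ℝ E] {u v : E} {c d M p q : ℝ}
    (hc : 0 ≤ c) (hM : 0 ≤ M) (hpq : p + q ≠ 0)
    (hu : ‖u‖ ≤ c * M ^ p) (hv : ‖v‖ ≤ d * M ^ q) :
    ⟪u, v⟫ ≤ c * d * M ^ (p + q) := by
  calc ⟪u, v⟫ ≤ ‖u‖ * ‖v‖ := real_inner_le_norm u v
    _ ≤ c * M ^ p * (d * M ^ q) := mul_le_mul hu hv (norm_nonneg v) (by positivity)
    _ = c * d * M ^ (p + q) := by rw [rpow_add' hM hpq]; ring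

theorem integral_weight_mul_rpow_norm_le {w₁ w₂ h p M : ℝ} (hw₁ : 0 ≤ w₁) (hw₂ : 0 ≤ w₂)
    (hh : 0 ≤ h) (hp : 0 ≤ p) {φ : ℝ → E} (hφ : ∀ θ ∈ Ioc (-h) 0, ‖φ θ‖ ≤ M) :
    ∫ θ in (-h)..0, (w₁ + (h + θ) * w₂) * ‖φ θ‖ ^ p ≤ (w₁ + h * w₂) * M ^ p * h := by
  have hbound : ∀ θ ∈ uIoc (-h) 0,
      ‖(w₁ + (h + θ) * w₂) * ‖φ θ‖ ^ p‖ ≤ (w₁ + h * w₂) * M ^ p := by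
    intro θ hθ
    rw [uIoc_of_le (by linarith)] at hθ
    have hweight : 0 ≤ w₁ + (h + θ) * w₂ := by nlinarith [hθ.1]
    rw [norm_mul, Real.norm_of_nonneg hweight, Real.norm_of_nonneg (by positivity)]
    gcongr
    · nlinarith [hθ.2]
    · exact hφ θ hθ
  calc ∫ θ in (-h)..0, (w₁ + (h + θ) * w₂) * ‖φ θ‖ ^ p
      ≤ ‖∫ θ in (-h)..0, (w₁ + (h + θ) * w₂) * ‖φ θ‖ ^ p‖ := le_abs_self _
    _ ≤ (w₁ + h * w₂) * M ^ p * h := by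
      simpa [abs_of_nonneg hh] using intervalIntegral.norm_integral_le_of_norm_le_const hbound

end

theorem functional_upper_bound_beta_general
    {n : ℕ}
    (h μ : ℝ) (hh : 0 < h) (hμ : 1 < μ)
    (f : EuclideanSpace ℝ (Fin n) × EuclideanSpace ℝ (Fin n) → EuclideanSpace ℝ (Fin n))
    (m : ℝ) (hm : 0 < m)
    (hfb : ∀ x y : EuclideanSpace ℝ (Fin n), ‖f (x, y)‖ ≤ m * (‖x‖ ^ μ + ‖y‖ ^ μ))
    (γ : ℝ) (hγ : 2 ≤ γ)
    (V : EuclideanSpace ℝ (Fin n) → ℝ)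
    (k₁ k₂ : ℝ) (hk₂ : 0 < k₂)
    (hVub : ∀ x : EuclideanSpace ℝ (Fin n), V x ≤ k₁ * ‖x‖ ^ γ)
    (hgrad : ∀ x : EuclideanSpace ℝ (Fin n), ‖gradient V x‖ ≤ k₂ * ‖x‖ ^ (γ - 1))
    (w₁ w₂ : ℝ) (hw₁ : 0 < w₁) (hw₂ : 0 < w₂)
    (β : ℝ) (hβ : β = (2 * k₂ * m + w₁ + h * w₂) * h) :
    ∀ φ : ℝ → EuclideanSpace ℝ (Fin n), ContinuousOn φ (Set.Icc (-h) 0) →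
      V (φ 0) + ⟪gradient V (φ 0), ∫ θ in (-h)..0, f (φ 0, φ θ)⟫ +
          ∫ θ in (-h)..0, (w₁ + (h + θ) * w₂) * ‖φ θ‖ ^ (γ + μ - 1) ≤
        k₁ * ‖φ 0‖ ^ γ + β * (⨆ θ : Set.Icc (-h) (0:ℝ), ‖φ θ.1‖) ^ (γ + μ - 1) := by
  intro φ hφ
  set M := ⨆ θ : Icc (-h) (0:ℝ), ‖φ θ.1‖
  have hM : ∀ θ ∈ Icc (-h) (0:ℝ), ‖φ θ‖ ≤ M := fun θ hθ =>
    isCompact_Icc.le_ciSup_of_continuousOn (g := fun θ => ‖φ θ‖) hφ.norm hθ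
  have hM₀ : ‖φ 0‖ ≤ M := hM 0 ⟨by linarith, le_rfl⟩
  have hMIoc : ∀ θ ∈ Ioc (-h) (0:ℝ), ‖φ θ‖ ≤ M := fun θ hθ => hM θ (Ioc_subset_Icc_self hθ)
  have hM_nonneg : 0 ≤ M := (norm_nonneg _).trans hM₀
  have hgrad₀ : ‖gradient V (φ 0)‖ ≤ k₂ * M ^ (γ - 1) :=
    (hgrad _).trans (by gcongr; linarith)
  have hf₀ := norm_integral_le_of_growth hm.le (by linarith) (by linarith) hfb hM₀ hMIoc
  have hcross := inner_le_rpow_of_norm_le hk₂.le hM_nonneg (by linarith : γ - 1 + μ ≠ 0) hgrad₀ hf₀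
  have hweighted := integral_weight_mul_rpow_norm_le hw₁.le hw₂.le hh.le
    (by linarith : 0 ≤ γ + μ - 1) hMIoc
  rw [show γ - 1 + μ = γ + μ - 1 by ring] at hcross
  rw [hβ]
  linarith [hVub (φ 0)]

/-- The bound `v(φ) ≤ k₁‖φ(0)‖^γ + β‖φ‖_h^{γ+μ-1}` with `β = (2k₂m + w₁ + hw₂)h`. -/
theorem functional_upper_bound_beta
    {n : ℕ} (hn : 1 ≤ n)
    (h μ : ℝ) (hh : 0 < h) (hμ : 1 < μ)
    (f : EuclideanSpace ℝ (Fin n) × EuclideanSpace ℝ (Fin n) → EuclideanSpace ℝ (Fin n))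
    (hf : Continuous f)
    (m : ℝ) (hm : 0 < m)
    (hfb : ∀ x y : EuclideanSpace ℝ (Fin n), ‖f (x, y)‖ ≤ m * (‖x‖ ^ μ + ‖y‖ ^ μ))
    (γ : ℝ) (hγ : 2 ≤ γ)
    (V : EuclideanSpace ℝ (Fin n) → ℝ) (hV : ContDiff ℝ 1 V)
    (k₁ k₂ : ℝ) (hk₁ : 0 < k₁) (hk₂ : 0 < k₂)
    (hVub : ∀ x : EuclideanSpace ℝ (Fin n), V x ≤ k₁ * ‖x‖ ^ γ)
    (hgrad : ∀ x : EuclideanSpace ℝ (Fin n), ‖gradient V x‖ ≤ k₂ * ‖x‖ ^ (γ - 1))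
    (w₁ w₂ : ℝ) (hw₁ : 0 < w₁) (hw₂ : 0 < w₂)
    (β : ℝ) (hβ : β = (2 * k₂ * m + w₁ + h * w₂) * h) :
    ∀ φ : ℝ → EuclideanSpace ℝ (Fin n), ContinuousOn φ (Set.Icc (-h) 0) →
      V (φ 0) + ⟪gradient V (φ 0), ∫ θ in (-h)..0, f (φ 0, φ θ)⟫ +
          ∫ θ in (-h)..0, (w₁ + (h + θ) * w₂) * ‖φ θ‖ ^ (γ + μ - 1) ≤
        k₁ * ‖φ 0‖ ^ γ + β * (⨆ θ : Set.Icc (-h) (0:ℝ), ‖φ θ.1‖) ^ (γ + μ - 1) :=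
  functional_upper_bound_beta_general h μ hh hμ f m hm hfb γ hγ V k₁ k₂ hk₂ hVub hgrad w₁ w₂ hw₁ hw₂
    β hβ
end

section
/- Let L = m m₁ k₂ + m² k₃, H₂ = (min{w₀/(4hL), w₁/(2hL), w₂/(2L)})^{1/(μ−1)}, δ ∈ (0, H₂), and c = min{w₀ − 4hLδ^{μ−1}, w₂ − 2Lδ^{μ−1}}. Let x be a solution of the delay system and t > 0 be such that ‖x(t+θ)‖ ≤ δ for all θ ∈ [−h,0]. Then the function v_x is differentiable at t and its derivative satisfies v_x′(t) ≤ −c·(‖x(t)‖^{γ+μ−1} + ∫_{−h}^{0} ‖x(t+θ)‖^{γ+μ−1} dθ). -/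
open Real Set RealInnerProductSpace Filter Topology

/-!
The window integrals `∫ s in (τ - h)..τ, g (x τ) s` are differentiated by the Leibniz rule:
continuous partial derivatives make `(u, r) ↦ ∫ s in a..r, g u s` strictly differentiable. In the
derivative of `v_x`, the term `⟪∇V(x t), ẋ(t)⟫` cancels against the lower-end contribution
`-⟪∇V(x t), f(x t, x (t - h))⟫`, leaving `⟪∇V(x t), f(x t, x t)⟫ ≤ -w ‖x t‖ ^ (γ + μ - 1)` and two
integrals involving `∂f/∂x` and `∇²V`. Expanded, their integrands are products of powers of
`‖x t‖`, `‖x (t - h)‖`, `‖x s‖` of total degree `γ + 2μ - 2`; on the `δ`-ball each such product is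
at most `δ ^ (μ - 1)` times the `(γ + μ - 1)`-th power of its largest factor. The resulting
`L δ ^ (μ - 1)` terms are absorbed by `w₀`, `w₁`, `w₂` once `δ < H₂`.
-/

section Leibniz

variable {X Y : Type*} [NormedAddCommGroup X] [NormedSpace ℝ X]
  [NormedAddCommGroup Y] [NormedSpace ℝ Y]
  {g : X → ℝ → Y} {D : X → ℝ → X →L[ℝ] Y}

theorem hasFDerivAt_intervalIntegral_of_continuous_fderiv (hg : Continuous ↿g)
    (hD : ∀ u s, HasFDerivAt (g · s) (D u s) u) (hDc : Continuous ↿D) (a b : ℝ) (u₀ : X) :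
    HasFDerivAt (fun u => ∫ s in a..b, g u s) (∫ s in a..b, D u₀ s) u₀ := by
  obtain ⟨N, hN, hND⟩ := isCompact_uIcc.mem_uniformity_of_prod hDc.continuousOn (mem_univ u₀)
    (Metric.dist_mem_uniformity one_pos)
  rw [nhdsWithin_univ] at hN
  refine intervalIntegral.hasFDerivAt_integral_of_dominated_of_fderiv_le
    (bound := fun s => ‖D u₀ s‖ + 1) hN (.of_forall fun u => ?_)
    ((hg.uncurry_left u₀).intervalIntegrable a b) ?_ (.of_forall fun s hs u hu => ?_)
    (Continuous.intervalIntegrable (by fun_prop) a b) (.of_forall fun s _ u _ => hD u s)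
  · exact (hg.uncurry_left u).aestronglyMeasurable
  · exact (hDc.uncurry_left u₀).aestronglyMeasurable
  · have hclose : ‖D u s - D u₀ s‖ < 1 := by
      simpa [dist_eq_norm] using hND u hu s (uIoc_subset_uIcc hs)
    linarith [norm_le_insert' (D u s) (D u₀ s)]

theorem hasStrictFDerivAt_parametric_primitive [CompleteSpace Y] (hg : Continuous ↿g)
    (hD : ∀ u s, HasFDerivAt (g · s) (D u s) u) (hDc : Continuous ↿D) (a : ℝ) (p : X × ℝ) :
    HasStrictFDerivAt (fun q : X × ℝ => ∫ s in a..q.2, g q.1 s)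
      ((∫ s in a..p.2, D p.1 s).coprod (.smulRight (1 : ℝ →L[ℝ] ℝ) (g p.1 p.2))) p :=
  hasStrictFDerivAt_uncurry_coprod (f := fun u r => ∫ s in a..r, g u s)
    (f₁ := fun u r => ∫ s in a..r, D u s) (f₂ := fun u r => .smulRight 1 (g u r))
    (.of_forall fun q => hasFDerivAt_intervalIntegral_of_continuous_fderiv hg hD hDc a q.2 q.1)
    (.of_forall fun q =>
      ((hg.uncurry_left q.1).integral_hasStrictDerivAt a q.2).hasDerivAt.hasFDerivAt)
    (intervalIntegral.continuous_parametric_primitive_of_continuous hDc).continuousAt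
    (ContinuousLinearMap.toSpanSingletonCLE.continuous.comp hg).continuousAt

theorem hasDerivAt_window_integral [CompleteSpace Y] (hg : Continuous ↿g)
    (hD : ∀ u s, HasFDerivAt (g · s) (D u s) u) (hDc : Continuous ↿D) {y : ℝ → X} {y' : X}
    {t : ℝ} (hy : HasDerivAt y y' t) (h : ℝ) :
    HasDerivAt (fun τ => ∫ s in (τ - h)..τ, g (y τ) s)
      ((∫ s in (t - h)..t, D (y t) s) y' + (g (y t) t - g (y t) (t - h))) t := by
  have hprimitive {b : ℝ → ℝ} (hb : HasDerivAt b 1 t) :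
      HasDerivAt (fun τ => ∫ s in 0..b τ, g (y τ) s)
        ((∫ s in 0..b t, D (y t) s) y' + g (y t) (b t)) t := by
    simpa [Function.comp_def] using (hasStrictFDerivAt_parametric_primitive hg hD hDc 0
      (y t, b t)).hasFDerivAt.comp_hasDerivAt t (hy.prodMk hb)
  convert (hprimitive (hasDerivAt_id t)).sub (hprimitive ((hasDerivAt_id t).sub_const h))
    using 1
  · funext τ
    rw [Pi.sub_apply, intervalIntegral.integral_interval_sub_left
      ((hg.uncurry_left _).intervalIntegrable _ _) ((hg.uncurry_left _).intervalIntegrable _ _), id]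
  · rw [id, add_sub_add_comm, ← _root_.sub_apply, intervalIntegral.integral_interval_sub_left
      ((hDc.uncurry_left _).intervalIntegrable _ _) ((hDc.uncurry_left _).intervalIntegrable _ _)]

theorem hasDerivAt_window_integral_of_real [CompleteSpace Y] {g D : ℝ → ℝ → Y}
    (hg : Continuous ↿g) (hD : ∀ u s, HasDerivAt (g · s) (D u s) u) (hDc : Continuous ↿D)
    (t h : ℝ) :
    HasDerivAt (fun τ => ∫ s in (τ - h)..τ, g τ s)
      ((∫ s in (t - h)..t, D t s) + (g t t - g t (t - h))) t := by
  have hderiv := hasDerivAt_window_integral hg (fun u s => (hD u s).hasFDerivAt)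
    (ContinuousLinearMap.toSpanSingletonCLE.continuous.comp hDc) (hasDerivAt_id' t) h
  have hcomm := (ContinuousLinearMap.toSpanSingletonLIE ℝ Y).toLinearIsometry
    |>.intervalIntegral_comp_comm (D t) (a := t - h) (b := t) (μ := MeasureTheory.volume)
  simp only [LinearIsometryEquiv.coe_toLinearIsometry,
    ContinuousLinearMap.toSpanSingletonLIE_apply] at hcomm
  rwa [hcomm, ContinuousLinearMap.toSpanSingleton_apply, one_smul] at hderiv

end Leibniz

theorem ContDiff.gradient {E : Type*} [NormedAddCommGroup E] [InnerProductSpace ℝ E]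
    [CompleteSpace E] {V : E → ℝ} {n : WithTop ℕ∞} (hV : ContDiff ℝ (n + 1) V) :
    ContDiff ℝ n (gradient V) :=
  (InnerProductSpace.toDual ℝ E).symm.contDiff.comp (hV.fderiv_right le_rfl)

section PartialDerivative

variable {E F : Type*} [NormedAddCommGroup E] [NormedSpace ℝ E] [NormedAddCommGroup F]
  [NormedSpace ℝ F] {f : E × E → F}

theorem ContDiff.continuous_fderiv_partial_fst (hf : ContDiff ℝ 1 f) :
    Continuous fun p : E × E => fderiv ℝ (fun u => f (u, p.2)) p.1 := by
  have hpartial : (fun p : E × E => fderiv ℝ (fun u => f (u, p.2)) p.1) =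
      fun p => (fderiv ℝ f p).comp (ContinuousLinearMap.inl ℝ E E) :=
    funext fun p => ((hf.differentiable one_ne_zero p).hasFDerivAt.comp p.1
      (hasFDerivAt_prodMk_left p.1 p.2)).fderiv
  rw [hpartial]
  exact (hf.continuous_fderiv one_ne_zero).clm_comp continuous_const

theorem hasDerivAt_window_integral_of_contDiff [CompleteSpace F] (hf : ContDiff ℝ 1 f)
    {x : ℝ → E} (hx : Continuous x) {x' : E} {t : ℝ} (hxt : HasDerivAt x x' t) (h : ℝ) :
    HasDerivAt (fun τ => ∫ s in (τ - h)..τ, f (x τ, x s))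
      ((∫ s in (t - h)..t, fderiv ℝ (fun u => f (u, x s)) (x t)) x' +
        (f (x t, x t) - f (x t, x (t - h)))) t :=
  hasDerivAt_window_integral (g := fun u s => f (u, x s))
    (D := fun u s => fderiv ℝ (fun v => f (v, x s)) u) (by fun_prop)
    (fun u s => ((hf.differentiable one_ne_zero).comp
      (differentiable_id.prodMk (differentiable_const _)) u).hasFDerivAt)
    (hf.continuous_fderiv_partial_fst.comp (continuous_fst.prodMk (hx.comp continuous_snd))) hxt h

end PartialDerivative

theorem rpow_mul_rpow_mul_rpow_le {z₁ z₂ z₃ M δ α β σ P e : ℝ} (hz₁ : 0 ≤ z₁) (hz₂ : 0 ≤ z₂)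
    (hz₃ : 0 ≤ z₃) (h₁ : z₁ ≤ M) (h₂ : z₂ ≤ M) (h₃ : z₃ ≤ M) (hMδ : M ≤ δ) (hα : 0 ≤ α)
    (hβ : 0 ≤ β) (hσ : 0 ≤ σ) (hP : 0 ≤ P) (he : 0 ≤ e) (hsum : α + β + σ = P + e) :
    z₁ ^ α * z₂ ^ β * z₃ ^ σ ≤ δ ^ e * M ^ P := by
  have hM : 0 ≤ M := hz₁.trans h₁
  calc z₁ ^ α * z₂ ^ β * z₃ ^ σ ≤ M ^ α * M ^ β * M ^ σ := by gcongr
    _ = M ^ e * M ^ P := by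
      rw [← rpow_add_of_nonneg hM hα hβ, ← rpow_add_of_nonneg hM (add_nonneg hα hβ) hσ, hsum,
        add_comm, rpow_add_of_nonneg hM he hP]
    _ ≤ δ ^ e * M ^ P := by gcongr

theorem max_rpow_le_rpow_add_rpow {a b P : ℝ} (ha : 0 ≤ a) (hb : 0 ≤ b) :
    max a b ^ P ≤ a ^ P + b ^ P := by
  rcases le_total a b with hab | hab
  · rw [max_eq_right hab]
    linarith [rpow_nonneg ha P]
  · rw [max_eq_left hab]
    linarith [rpow_nonneg hb P]

theorem rpow_mul_add_mul_add_le {u a b δ p q r P e : ℝ} (hu : 0 ≤ u) (ha : 0 ≤ a) (hb : 0 ≤ b)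
    (huδ : u ≤ δ) (haδ : a ≤ δ) (hbδ : b ≤ δ) (hp : 0 ≤ p) (hq : 0 ≤ q) (hr : 0 ≤ r)
    (hP : 0 ≤ P) (he : 0 ≤ e) (hsum : p + q + r = P + e) :
    u ^ p * ((u ^ q + b ^ q) * (u ^ r + a ^ r)) ≤
      δ ^ e * (4 * u ^ P + 2 * b ^ P + 2 * a ^ P) := by
  have hδe : 0 ≤ δ ^ e := rpow_nonneg (hu.trans huδ) e
  have key {z₂ z₃ M : ℝ} (hz₂ : 0 ≤ z₂) (hz₃ : 0 ≤ z₃) (h₁ : u ≤ M) (h₂ : z₂ ≤ M) (h₃ : z₃ ≤ M)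
      (hMδ : M ≤ δ) : u ^ p * z₂ ^ q * z₃ ^ r ≤ δ ^ e * M ^ P :=
    rpow_mul_rpow_mul_rpow_le hu hz₂ hz₃ h₁ h₂ h₃ hMδ hp hq hr hP he hsum
  -- coefficients of `b ^ P` and `a ^ P` at `2`.
  have t₁ := key hu hu le_rfl le_rfl le_rfl huδ
  have t₂ := key hu ha (le_max_left u a) (le_max_left u a) (le_max_right u a) (max_le huδ haδ)
  have t₃ := key hb hu (le_max_left u b) (le_max_right u b) (le_max_left u b) (max_le huδ hbδ)
  have t₄ := key hb ha (le_max_left u (max b a)) ((le_max_left b a).trans (le_max_right _ _))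
    ((le_max_right b a).trans (le_max_right _ _)) (max_le huδ (max_le hbδ haδ))
  have m₄ : max u (max b a) ^ P ≤ u ^ P + b ^ P + a ^ P := by
    linarith [max_rpow_le_rpow_add_rpow (P := P) hu (le_max_of_le_left hb : 0 ≤ max b a),
      max_rpow_le_rpow_add_rpow (P := P) hb ha]
  linarith [mul_le_mul_of_nonneg_left (max_rpow_le_rpow_add_rpow (P := P) hu ha) hδe,
    mul_le_mul_of_nonneg_left (max_rpow_le_rpow_add_rpow (P := P) hu hb) hδe,
    mul_le_mul_of_nonneg_left m₄ hδe]

theorem inner_apply_add_inner_le {E : Type*} [NormedAddCommGroup E] [InnerProductSpace ℝ E]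
    {g v F : E} {A H : E →L[ℝ] E} {u a b δ μ γ m m₁ k₂ k₃ : ℝ} (hμ : 1 ≤ μ) (hγ : 2 ≤ γ)
    (hm : 0 ≤ m) (hm₁ : 0 ≤ m₁) (hk₂ : 0 ≤ k₂) (hk₃ : 0 ≤ k₃) (hu : 0 ≤ u) (ha : 0 ≤ a)
    (hb : 0 ≤ b) (huδ : u ≤ δ) (haδ : a ≤ δ) (hbδ : b ≤ δ)
    (hg : ‖g‖ ≤ k₂ * u ^ (γ - 1)) (hH : ‖H‖ ≤ k₃ * u ^ (γ - 2))
    (hA : ‖A‖ ≤ m₁ * (u ^ (μ - 1) + a ^ (μ - 1))) (hv : ‖v‖ ≤ m * (u ^ μ + b ^ μ))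
    (hF : ‖F‖ ≤ m * (u ^ μ + a ^ μ)) :
    ⟪g, A v⟫ + ⟪H v, F⟫ ≤ (m * m₁ * k₂ + m ^ 2 * k₃) * δ ^ (μ - 1) *
      (4 * u ^ (γ + μ - 1) + 2 * b ^ (γ + μ - 1) + 2 * a ^ (γ + μ - 1)) := by
  have hgrad : ⟪g, A v⟫ ≤
      m * m₁ * k₂ * (u ^ (γ - 1) * ((u ^ μ + b ^ μ) * (u ^ (μ - 1) + a ^ (μ - 1)))) :=
    calc ⟪g, A v⟫ ≤ ‖g‖ * (‖A‖ * ‖v‖) :=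
          (real_inner_le_norm _ _).trans (by gcongr; exact A.le_opNorm v)
      _ ≤ k₂ * u ^ (γ - 1) * (m₁ * (u ^ (μ - 1) + a ^ (μ - 1)) * (m * (u ^ μ + b ^ μ))) := by
          gcongr
      _ = _ := by ring
  have hhess : ⟪H v, F⟫ ≤ m ^ 2 * k₃ * (u ^ (γ - 2) * ((u ^ μ + b ^ μ) * (u ^ μ + a ^ μ))) :=
    calc ⟪H v, F⟫ ≤ ‖H‖ * ‖v‖ * ‖F‖ :=
          (real_inner_le_norm _ _).trans (by gcongr; exact H.le_opNorm v)
      _ ≤ k₃ * u ^ (γ - 2) * (m * (u ^ μ + b ^ μ)) * (m * (u ^ μ + a ^ μ)) := by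
          gcongr
      _ = _ := by ring
  have hP : 0 ≤ γ + μ - 1 := by linarith
  have he : 0 ≤ μ - 1 := by linarith
  have h₁ := rpow_mul_add_mul_add_le hu ha hb huδ haδ hbδ (by linarith : 0 ≤ γ - 1)
    (by linarith : 0 ≤ μ) he hP he (by ring)
  have h₂ := rpow_mul_add_mul_add_le hu ha hb huδ haδ hbδ (by linarith : 0 ≤ γ - 2)
    (by linarith : 0 ≤ μ) (by linarith : 0 ≤ μ) hP he (by ring)
  linarith [mul_le_mul_of_nonneg_left h₁ (by positivity : 0 ≤ m * m₁ * k₂),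
    mul_le_mul_of_nonneg_left h₂ (by positivity : 0 ≤ m ^ 2 * k₃)]

section Functional

variable {E : Type*} [NormedAddCommGroup E] [InnerProductSpace ℝ E] [CompleteSpace E]

noncomputable def delayLyapunovFunctional (V : E → ℝ) (f : E × E → E) (h w₁ w₂ p : ℝ)
    (x : ℝ → E) (τ : ℝ) : ℝ :=
  V (x τ) + ⟪gradient V (x τ), ∫ s in (τ - h)..τ, f (x τ, x s)⟫ +
    ∫ s in (τ - h)..τ, (w₁ + (h + s - τ) * w₂) * ‖x s‖ ^ p

theorem hasDerivAt_delayLyapunovFunctional {V : E → ℝ} {f : E × E → E} {h w₁ w₂ p : ℝ}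
    {x : ℝ → E} {x' : E} {t : ℝ} (hV : ContDiff ℝ 2 V) (hf : ContDiff ℝ 1 f) (hp : 0 ≤ p)
    (hx : Continuous x) (hxt : HasDerivAt x x' t) :
    HasDerivAt (delayLyapunovFunctional V f h w₁ w₂ p x)
      (⟪gradient V (x t), x'⟫ +
        (⟪gradient V (x t), (∫ s in (t - h)..t, fderiv ℝ (fun u => f (u, x s)) (x t)) x' +
            (f (x t, x t) - f (x t, x (t - h)))⟫ +
          ⟪fderiv ℝ (gradient V) (x t) x', ∫ s in (t - h)..t, f (x t, x s)⟫) +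
        ((w₁ + h * w₂) * ‖x t‖ ^ p - w₁ * ‖x (t - h)‖ ^ p -
          w₂ * ∫ s in (t - h)..t, ‖x s‖ ^ p)) t := by
  have hVx : HasDerivAt (fun τ => V (x τ)) ⟪gradient V (x t), x'⟫ t := by
    rw [gradient, InnerProductSpace.toDual_symm_apply]
    exact (hV.differentiable two_ne_zero (x t)).hasFDerivAt.comp_hasDerivAt t hxt
  have hgradVx : HasDerivAt (fun τ => gradient V (x τ)) (fderiv ℝ (gradient V) (x t) x') t :=
    ((ContDiff.gradient (n := 1) hV).differentiable one_ne_zero (x t)).hasFDerivAt.comp_hasDerivAt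
      t hxt
  have hweight := hasDerivAt_window_integral_of_real
    (g := fun τ s => (w₁ + (h + s - τ) * w₂) * ‖x s‖ ^ p) (D := fun _ s => -(w₂ * ‖x s‖ ^ p))
    (by fun_prop) (fun u s => (((((hasDerivAt_id' u).const_sub (h + s)).mul_const w₂).const_add
      w₁).mul_const (‖x s‖ ^ p)).congr_deriv (by ring)) (by fun_prop) t h
  refine ((hVx.add (hgradVx.inner ℝ (hasDerivAt_window_integral_of_contDiff hf hx hxt h))).add
    hweight).congr_deriv ?_
  rw [intervalIntegral.integral_neg, intervalIntegral.integral_const_mul]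
  ring

theorem inner_window_integral_terms_le {V : E → ℝ} {f : E × E → E} {x : ℝ → E}
    {t h δ μ γ m m₁ k₂ k₃ : ℝ} (hf : ContDiff ℝ 1 f) (hx : Continuous x) (hh : 0 ≤ h)
    (hμ : 1 ≤ μ) (hγ : 2 ≤ γ) (hm : 0 ≤ m) (hm₁ : 0 ≤ m₁) (hk₂ : 0 ≤ k₂) (hk₃ : 0 ≤ k₃)
    (hfb : ∀ y z : E, ‖f (y, z)‖ ≤ m * (‖y‖ ^ μ + ‖z‖ ^ μ))
    (hfx : ∀ y z : E, ‖fderiv ℝ (fun u => f (u, z)) y‖ ≤ m₁ * (‖y‖ ^ (μ - 1) + ‖z‖ ^ (μ - 1)))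
    (hgrad : ∀ y : E, ‖gradient V y‖ ≤ k₂ * ‖y‖ ^ (γ - 1))
    (hhess : ∀ y : E, ‖fderiv ℝ (gradient V) y‖ ≤ k₃ * ‖y‖ ^ (γ - 2))
    (hxδ : ∀ s ∈ Icc (t - h) t, ‖x s‖ ≤ δ) :
    ⟪gradient V (x t), (∫ s in (t - h)..t, fderiv ℝ (fun u => f (u, x s)) (x t))
        (f (x t, x (t - h)))⟫ +
      ⟪fderiv ℝ (gradient V) (x t) (f (x t, x (t - h))), ∫ s in (t - h)..t, f (x t, x s)⟫ ≤
    (m * m₁ * k₂ + m ^ 2 * k₃) * δ ^ (μ - 1) *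
      (h * (4 * ‖x t‖ ^ (γ + μ - 1) + 2 * ‖x (t - h)‖ ^ (γ + μ - 1)) +
        2 * ∫ s in (t - h)..t, ‖x s‖ ^ (γ + μ - 1)) := by
  have hA : Continuous fun s => fderiv ℝ (fun u => f (u, x s)) (x t) :=
    hf.continuous_fderiv_partial_fst.comp (continuous_const.prodMk hx)
  have hF : Continuous fun s => f (x t, x s) := hf.continuous.comp (by fun_prop)
  have hP : 0 ≤ γ + μ - 1 := by linarith
  have hle : t - h ≤ t := by linarith
  have hxtδ := hxδ t ⟨hle, le_rfl⟩
  have hxhδ := hxδ (t - h) ⟨le_rfl, hle⟩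
  have hinner {φ : ℝ → E} (hφ : Continuous φ) (w : E) :
      ⟪w, ∫ s in (t - h)..t, φ s⟫ = ∫ s in (t - h)..t, ⟪w, φ s⟫ :=
    ((innerSL ℝ w).intervalIntegral_comp_comm (hφ.intervalIntegrable _ _)).symm
  rw [ContinuousLinearMap.intervalIntegral_apply (hA.intervalIntegrable _ _),
    hinner (hA.clm_apply continuous_const), hinner hF, ← intervalIntegral.integral_add
      ((continuous_const.inner (hA.clm_apply continuous_const)).intervalIntegrable _ _)
      ((continuous_const.inner hF).intervalIntegrable _ _)]
  have hψ : Continuous fun s => ‖x s‖ ^ (γ + μ - 1) := hx.norm.rpow_const fun _ => Or.inr hP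
  calc _ ≤ ∫ s in (t - h)..t, (m * m₁ * k₂ + m ^ 2 * k₃) * δ ^ (μ - 1) *
        (4 * ‖x t‖ ^ (γ + μ - 1) + 2 * ‖x (t - h)‖ ^ (γ + μ - 1) + 2 * ‖x s‖ ^ (γ + μ - 1)) :=
      intervalIntegral.integral_mono_on hle
        (((continuous_const.inner (hA.clm_apply continuous_const)).add
          (continuous_const.inner hF)).intervalIntegrable _ _)
        (Continuous.intervalIntegrable (by fun_prop) _ _) fun s hs =>
          inner_apply_add_inner_le hμ hγ hm hm₁ hk₂ hk₃ (norm_nonneg _) (norm_nonneg _)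
            (norm_nonneg _) hxtδ (hxδ s hs) hxhδ (hgrad _) (hhess _) (hfx _ _) (hfb _ _) (hfb _ _)
    _ = _ := by
      rw [intervalIntegral.integral_const_mul, intervalIntegral.integral_add
        intervalIntegrable_const ((hψ.intervalIntegrable _ _).const_mul _),
        intervalIntegral.integral_const, intervalIntegral.integral_const_mul, sub_sub_cancel,
        smul_eq_mul]

theorem exists_hasDerivAt_delayLyapunovFunctional_le {V : E → ℝ} {f : E × E → E} {x : ℝ → E}
    {t h δ μ γ m m₁ k₂ k₃ w w₁ w₂ c : ℝ} (hV : ContDiff ℝ 2 V) (hf : ContDiff ℝ 1 f)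
    (hx : Continuous x) (hxt : HasDerivAt x (f (x t, x (t - h))) t) (hh : 0 ≤ h)
    (hμ : 1 ≤ μ) (hγ : 2 ≤ γ) (hm : 0 ≤ m) (hm₁ : 0 ≤ m₁) (hk₂ : 0 ≤ k₂) (hk₃ : 0 ≤ k₃)
    (hfb : ∀ y z : E, ‖f (y, z)‖ ≤ m * (‖y‖ ^ μ + ‖z‖ ^ μ))
    (hfx : ∀ y z : E, ‖fderiv ℝ (fun u => f (u, z)) y‖ ≤ m₁ * (‖y‖ ^ (μ - 1) + ‖z‖ ^ (μ - 1)))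
    (hgrad : ∀ y : E, ‖gradient V y‖ ≤ k₂ * ‖y‖ ^ (γ - 1))
    (hhess : ∀ y : E, ‖fderiv ℝ (gradient V) y‖ ≤ k₃ * ‖y‖ ^ (γ - 2))
    (hdV : ∀ y : E, ⟪gradient V y, f (y, y)⟫ ≤ -w * ‖y‖ ^ (γ + μ - 1))
    (hxδ : ∀ θ ∈ Icc (-h) 0, ‖x (t + θ)‖ ≤ δ)
    (hc₀ : 4 * h * (m * m₁ * k₂ + m ^ 2 * k₃) * δ ^ (μ - 1) ≤ w - w₁ - h * w₂ - c)
    (hc₁ : 2 * h * (m * m₁ * k₂ + m ^ 2 * k₃) * δ ^ (μ - 1) ≤ w₁)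
    (hc₂ : 2 * (m * m₁ * k₂ + m ^ 2 * k₃) * δ ^ (μ - 1) ≤ w₂ - c) :
    ∃ d, HasDerivAt (delayLyapunovFunctional V f h w₁ w₂ (γ + μ - 1) x) d t ∧
      d ≤ -c * (‖x t‖ ^ (γ + μ - 1) + ∫ θ in (-h)..0, ‖x (t + θ)‖ ^ (γ + μ - 1)) := by
  have hP : 0 ≤ γ + μ - 1 := by linarith
  refine ⟨_, hasDerivAt_delayLyapunovFunctional hV hf hP hx hxt, ?_⟩
  have hxsδ : ∀ s ∈ Icc (t - h) t, ‖x s‖ ≤ δ := fun s hs => by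
    simpa only [add_sub_cancel] using hxδ (s - t) ⟨by linarith [hs.1], by linarith [hs.2]⟩
  have hdelay := inner_window_integral_terms_le hf hx hh hμ hγ hm hm₁ hk₂ hk₃ hfb hfx hgrad hhess
    hxsδ
  have hshift : ∫ θ in (-h)..0, ‖x (t + θ)‖ ^ (γ + μ - 1) =
      ∫ s in (t - h)..t, ‖x s‖ ^ (γ + μ - 1) := by
    rw [intervalIntegral.integral_comp_add_left (fun s => ‖x s‖ ^ (γ + μ - 1)), add_zero,
      ← sub_eq_add_neg]
  have hU := rpow_nonneg (norm_nonneg (x t)) (γ + μ - 1)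
  have hB := rpow_nonneg (norm_nonneg (x (t - h))) (γ + μ - 1)
  have hI : 0 ≤ ∫ s in (t - h)..t, ‖x s‖ ^ (γ + μ - 1) :=
    intervalIntegral.integral_nonneg (by linarith) fun s _ => rpow_nonneg (norm_nonneg _) _
  rw [hshift, inner_add_right, inner_sub_right]
  linarith [hdV (x t), mul_le_mul_of_nonneg_right hc₀ hU, mul_le_mul_of_nonneg_right hc₁ hB,
    mul_le_mul_of_nonneg_right hc₂ hI]

theorem Set.EqOn.delayLyapunovFunctional_eventuallyEq {V : E → ℝ} {f : E × E → E}
    {h w₁ w₂ p a t : ℝ} {x y : ℝ → E} (hxy : EqOn x y (Ici a)) (hh : 0 ≤ h) (ht : a + h < t) :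
    delayLyapunovFunctional V f h w₁ w₂ p x =ᶠ[𝓝 t] delayLyapunovFunctional V f h w₁ w₂ p y := by
  filter_upwards [Ioi_mem_nhds ht] with τ hτ
  have hwindow : EqOn x y (uIcc (τ - h) τ) := fun s hs => by
    rw [uIcc_of_le (by linarith)] at hs
    exact hxy (show a ≤ s by linarith [hs.1, mem_Ioi.1 hτ])
  have hτ' : x τ = y τ := hwindow right_mem_uIcc
  simp only [delayLyapunovFunctional, hτ']
  rw [intervalIntegral.integral_congr fun s hs => congrArg (fun z => f (y τ, z)) (hwindow hs),
    intervalIntegral.integral_congr fun s hs =>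
      congrArg (fun z => (w₁ + (h + s - τ) * w₂) * ‖z‖ ^ p) (hwindow hs)]

end Functional

theorem rpow_bounds_of_lt_min_rpow_inv {h L μ w₀ w₁ w₂ δ : ℝ} (hh : 0 < h) (hL : 0 < L)
    (hμ : 1 < μ) (hw₀ : 0 < w₀) (hw₁ : 0 < w₁) (hw₂ : 0 < w₂)
    (hδ : δ ∈ Ioo 0 ((min (w₀ / (4 * h * L)) (min (w₁ / (2 * h * L)) (w₂ / (2 * L)))) ^
      (1 / (μ - 1)))) :
    4 * h * L * δ ^ (μ - 1) < w₀ ∧ 2 * h * L * δ ^ (μ - 1) < w₁ ∧ 2 * L * δ ^ (μ - 1) < w₂ := by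
  have hmin : 0 < min (w₀ / (4 * h * L)) (min (w₁ / (2 * h * L)) (w₂ / (2 * L))) := by
    positivity
  have hlt := (lt_rpow_inv_iff_of_pos hδ.1.le hmin.le (sub_pos.2 hμ)).1
    (by simpa only [one_div] using hδ.2)
  simp only [lt_min_iff, lt_div_iff₀ (by positivity : (0 : ℝ) < 4 * h * L),
    lt_div_iff₀ (by positivity : (0 : ℝ) < 2 * h * L),
    lt_div_iff₀ (by positivity : (0 : ℝ) < 2 * L)] at hlt
  refine ⟨?_, ?_, ?_⟩ <;> linarith [hlt.1, hlt.2.1, hlt.2.2]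

theorem functional_derivative_bound_general
    {n : ℕ}
    (h μ : ℝ) (hh : 0 < h) (hμ : 1 < μ)
    (f : EuclideanSpace ℝ (Fin n) × EuclideanSpace ℝ (Fin n) → EuclideanSpace ℝ (Fin n))
    (hf : ContDiff ℝ 1 f)
    (m m₁ : ℝ) (hm : 0 < m) (hm₁ : 0 < m₁)
    (hfb : ∀ x y : EuclideanSpace ℝ (Fin n), ‖f (x, y)‖ ≤ m * (‖x‖ ^ μ + ‖y‖ ^ μ))
    (hfx : ∀ x y : EuclideanSpace ℝ (Fin n),
      ‖fderiv ℝ (fun x' => f (x', y)) x‖ ≤ m₁ * (‖x‖ ^ (μ - 1) + ‖y‖ ^ (μ - 1)))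
    (γ : ℝ) (hγ : 2 ≤ γ)
    (V : EuclideanSpace ℝ (Fin n) → ℝ) (hV : ContDiff ℝ 2 V)
    (k₂ k₃ w : ℝ) (hk₂ : 0 < k₂) (hk₃ : 0 < k₃)
    (hgrad : ∀ x : EuclideanSpace ℝ (Fin n), ‖gradient V x‖ ≤ k₂ * ‖x‖ ^ (γ - 1))
    (hhess : ∀ x : EuclideanSpace ℝ (Fin n),
      ‖fderiv ℝ (gradient V) x‖ ≤ k₃ * ‖x‖ ^ (γ - 2))
    (hdV : ∀ x : EuclideanSpace ℝ (Fin n),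
      ⟪gradient V x, f (x, x)⟫ ≤ -w * ‖x‖ ^ (γ + μ - 1))
    (w₀ w₁ w₂ : ℝ) (hw₁ : 0 < w₁) (hw₂ : 0 < w₂)
    (hw₀ : w₀ = w - w₁ - h * w₂) (hw₀pos : 0 < w₀)
    (L H₂ δ c : ℝ)
    (hL : L = m * m₁ * k₂ + m ^ 2 * k₃)
    (hH₂ : H₂ = (min (w₀ / (4 * h * L)) (min (w₁ / (2 * h * L)) (w₂ / (2 * L)))) ^
      (1 / (μ - 1)))
    (hδ : δ ∈ Set.Ioo 0 H₂)
    (hc : c = min (w₀ - 4 * h * L * δ ^ (μ - 1)) (w₂ - 2 * L * δ ^ (μ - 1)))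
    (x : ℝ → EuclideanSpace ℝ (Fin n))
    (hxc : ContinuousOn x (Set.Ici (-h)))
    (hxd : ∀ t > (0:ℝ), HasDerivAt x (f (x t, x (t - h))) t)
    (t : ℝ) (ht : 0 < t)
    (hxδ : ∀ θ ∈ Set.Icc (-h) (0:ℝ), ‖x (t + θ)‖ ≤ δ) :
    DifferentiableAt ℝ (fun τ => V (x τ) +
        ⟪gradient V (x τ), ∫ s in (τ - h)..τ, f (x τ, x s)⟫ +
        ∫ s in (τ - h)..τ, (w₁ + (h + s - τ) * w₂) * ‖x s‖ ^ (γ + μ - 1)) t ∧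
      deriv (fun τ => V (x τ) +
        ⟪gradient V (x τ), ∫ s in (τ - h)..τ, f (x τ, x s)⟫ +
        ∫ s in (τ - h)..τ, (w₁ + (h + s - τ) * w₂) * ‖x s‖ ^ (γ + μ - 1)) t ≤
      -c * (‖x t‖ ^ (γ + μ - 1) + ∫ θ in (-h)..0, ‖x (t + θ)‖ ^ (γ + μ - 1)) := by
  -- `x` is only continuous on `[-h, ∞)`; its extension `x (max (-h) s)` has the same
  -- functional near `t > 0`.
  obtain ⟨y, hy, hyx⟩ : ∃ y : ℝ → EuclideanSpace ℝ (Fin n), Continuous y ∧ EqOn y x (Ici (-h)) :=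
    ⟨fun s => x (max (-h) s),
      hxc.comp_continuous (by fun_prop) fun s => mem_Ici.2 (le_max_left _ _),
      fun s hs => congrArg x (max_eq_right hs)⟩
  have hwindow : ∀ θ ∈ Icc (-h) 0, y (t + θ) = x (t + θ) := fun θ hθ =>
    hyx (show -h ≤ t + θ by linarith [hθ.1])
  have hyt : HasDerivAt y (f (y t, y (t - h))) t := by
    rw [hyx (show -h ≤ t by linarith), hyx (show -h ≤ t - h by linarith)]
    exact (hxd t ht).congr_of_eventuallyEq (hyx.eventuallyEq_of_mem (Ici_mem_nhds (by linarith)))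
  obtain ⟨hδ₀, hδ₁, hδ₂⟩ := rpow_bounds_of_lt_min_rpow_inv hh (by rw [hL]; positivity) hμ
    hw₀pos hw₁ hw₂ (hH₂ ▸ hδ)
  have hc₀ : c ≤ w₀ - 4 * h * L * δ ^ (μ - 1) := hc ▸ min_le_left _ _
  have hc₂ : c ≤ w₂ - 2 * L * δ ^ (μ - 1) := hc ▸ min_le_right _ _
  obtain ⟨d, hd, hdle⟩ := exists_hasDerivAt_delayLyapunovFunctional_le (w₁ := w₁) (w₂ := w₂)
    (c := c) hV hf hy hyt hh.le hμ.le hγ hm.le hm₁.le hk₂.le hk₃.le hfb hfx hgrad hhess hdV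
    (fun θ hθ => hwindow θ hθ ▸ hxδ θ hθ) (by rw [← hL]; linarith) (by rw [← hL]; linarith)
    (by rw [← hL]; linarith)
  have hdx := hd.congr_of_eventuallyEq
    (hyx.symm.delayLyapunovFunctional_eventuallyEq hh.le (by linarith))
  refine ⟨hdx.differentiableAt, hdx.deriv.trans_le (hdle.trans_eq ?_)⟩
  rw [hyx (show -h ≤ t by linarith), intervalIntegral.integral_congr fun θ hθ =>
    congrArg (‖·‖ ^ (γ + μ - 1)) (hwindow θ (by rwa [uIcc_of_le (by linarith)] at hθ))]

/-- Lemma 3: bound on the derivative of the Lyapunov–Krasovskii functional along solutions. -/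
theorem functional_derivative_bound
    {n : ℕ} (hn : 1 ≤ n)
    (h μ : ℝ) (hh : 0 < h) (hμ : 1 < μ)
    (f : EuclideanSpace ℝ (Fin n) × EuclideanSpace ℝ (Fin n) → EuclideanSpace ℝ (Fin n))
    (hf : ContDiff ℝ 1 f)
    (hhom : ∀ c > (0:ℝ), ∀ x y : EuclideanSpace ℝ (Fin n),
      f (c • x, c • y) = (c ^ μ) • f (x, y))
    (m m₁ : ℝ) (hm : 0 < m) (hm₁ : 0 < m₁)
    (hfb : ∀ x y : EuclideanSpace ℝ (Fin n), ‖f (x, y)‖ ≤ m * (‖x‖ ^ μ + ‖y‖ ^ μ))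
    (hfx : ∀ x y : EuclideanSpace ℝ (Fin n),
      ‖fderiv ℝ (fun x' => f (x', y)) x‖ ≤ m₁ * (‖x‖ ^ (μ - 1) + ‖y‖ ^ (μ - 1)))
    (γ : ℝ) (hγ : 2 ≤ γ)
    (V : EuclideanSpace ℝ (Fin n) → ℝ) (hV : ContDiff ℝ 2 V)
    (k₂ k₃ w : ℝ) (hk₂ : 0 < k₂) (hk₃ : 0 < k₃) (hw : 0 < w)
    (hgrad : ∀ x : EuclideanSpace ℝ (Fin n), ‖gradient V x‖ ≤ k₂ * ‖x‖ ^ (γ - 1))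
    (hhess : ∀ x : EuclideanSpace ℝ (Fin n),
      ‖fderiv ℝ (gradient V) x‖ ≤ k₃ * ‖x‖ ^ (γ - 2))
    (hdV : ∀ x : EuclideanSpace ℝ (Fin n),
      ⟪gradient V x, f (x, x)⟫ ≤ -w * ‖x‖ ^ (γ + μ - 1))
    (w₀ w₁ w₂ : ℝ) (hw₁ : 0 < w₁) (hw₂ : 0 < w₂)
    (hw₀ : w₀ = w - w₁ - h * w₂) (hw₀pos : 0 < w₀)
    (L H₂ δ c : ℝ)
    (hL : L = m * m₁ * k₂ + m ^ 2 * k₃)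
    (hH₂ : H₂ = (min (w₀ / (4 * h * L)) (min (w₁ / (2 * h * L)) (w₂ / (2 * L)))) ^
      (1 / (μ - 1)))
    (hδ : δ ∈ Set.Ioo 0 H₂)
    (hc : c = min (w₀ - 4 * h * L * δ ^ (μ - 1)) (w₂ - 2 * L * δ ^ (μ - 1)))
    (x : ℝ → EuclideanSpace ℝ (Fin n))
    (hxc : ContinuousOn x (Set.Ici (-h)))
    (hxd : ∀ t > (0:ℝ), HasDerivAt x (f (x t, x (t - h))) t)
    (t : ℝ) (ht : 0 < t)
    (hxδ : ∀ θ ∈ Set.Icc (-h) (0:ℝ), ‖x (t + θ)‖ ≤ δ) :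
    DifferentiableAt ℝ (fun τ => V (x τ) +
        ⟪gradient V (x τ), ∫ s in (τ - h)..τ, f (x τ, x s)⟫ +
        ∫ s in (τ - h)..τ, (w₁ + (h + s - τ) * w₂) * ‖x s‖ ^ (γ + μ - 1)) t ∧
      deriv (fun τ => V (x τ) +
        ⟪gradient V (x τ), ∫ s in (τ - h)..τ, f (x τ, x s)⟫ +
        ∫ s in (τ - h)..τ, (w₁ + (h + s - τ) * w₂) * ‖x s‖ ^ (γ + μ - 1)) t ≤
      -c * (‖x t‖ ^ (γ + μ - 1) + ∫ θ in (-h)..0, ‖x (t + θ)‖ ^ (γ + μ - 1)) :=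
  functional_derivative_bound_general h μ hh hμ f hf m m₁ hm hm₁ hfb hfx γ hγ V hV k₂ k₃ w hk₂ hk₃
    hgrad hhess hdV w₀ w₁ w₂ hw₁ hw₂ hw₀ hw₀pos L H₂ δ c hL hH₂ hδ hc x hxc hxd t ht hxδ
end

section
/- Let p and q be real numbers with p > q ≥ 1 and set L₁ = (2·max{1,h})^{p/q − 1}. Then for every a ≥ 0 and every continuous nonnegative function g : [−h,0] → ℝ one has (a^q + ∫_{−h}^{0} g(θ)^q dθ)^{p/q} ≤ L₁·(a^p + ∫_{−h}^{0} g(θ)^p dθ). -/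
open Real Set MeasureTheory

/-!
With `r = p / q > 1`, the map `t ↦ t ^ r` is convex, which gives
`(a ^ q + I) ^ r ≤ 2 ^ (r - 1) (a ^ p + I ^ r)` for the two summands, and, through Hölder's
inequality against the constant `1` on an interval of length `h`,
`(∫ g ^ q) ^ r ≤ h ^ (r - 1) ∫ g ^ p`. Both factors `1` and `h ^ (r - 1)` are at most
`max 1 h ^ (r - 1)`.
-/

theorem Real.rpow_add_le_mul_rpow_add_rpow {x y r : ℝ} (hx : 0 ≤ x) (hy : 0 ≤ y) (hr : 1 ≤ r) :
    (x + y) ^ r ≤ 2 ^ (r - 1) * (x ^ r + y ^ r) := by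
  lift x to NNReal using hx
  lift y to NNReal using hy
  exact_mod_cast NNReal.rpow_add_le_mul_rpow_add_rpow x y hr

namespace MeasureTheory

theorem rpow_integral_le_mul_integral_rpow {α : Type*} [MeasurableSpace α] {μ : Measure α}
    [IsFiniteMeasure μ] {f : α → ℝ} {r : ℝ} (hr : 1 < r) (hf : 0 ≤ᵐ[μ] f)
    (hfr : MemLp f (ENNReal.ofReal r) μ) :
    (∫ x, f x ∂μ) ^ r ≤ μ.real univ ^ (r - 1) * ∫ x, f x ^ r ∂μ := by
  have hr₀ : 0 < r := one_pos.trans hr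
  have holder := integral_mul_le_Lp_mul_Lq_of_nonneg (Real.HolderConjugate.conjExponent hr) hf
    (ae_of_all _ fun _ => zero_le_one) hfr (memLp_const 1)
  simp only [mul_one, one_rpow, integral_const, smul_eq_mul] at holder
  calc (∫ x, f x ∂μ) ^ r
      ≤ ((∫ x, f x ^ r ∂μ) ^ (1 / r) * μ.real univ ^ (1 / (r / (r - 1)))) ^ r :=
        rpow_le_rpow (integral_nonneg_of_ae hf) holder hr₀.le
    _ = μ.real univ ^ (r - 1) * ∫ x, f x ^ r ∂μ := by
        have hJ : 0 ≤ ∫ x, f x ^ r ∂μ :=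
          integral_nonneg_of_ae (hf.mono fun x hx => rpow_nonneg hx r)
        rw [mul_rpow (rpow_nonneg hJ _) (rpow_nonneg measureReal_nonneg _), ← rpow_mul hJ,
          ← rpow_mul measureReal_nonneg, one_div_mul_cancel hr₀.ne', rpow_one, mul_comm]
        congr 2
        field_simp

end MeasureTheory

theorem intervalIntegral.rpow_integral_le_mul_integral_rpow {a b r : ℝ} {f : ℝ → ℝ}
    (hab : a ≤ b) (hr : 1 < r) (hf : ContinuousOn f (Icc a b)) (hf₀ : ∀ x ∈ Icc a b, 0 ≤ f x) :
    (∫ x in a..b, f x) ^ r ≤ (b - a) ^ (r - 1) * ∫ x in a..b, f x ^ r := by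
  have hsub : Ioc a b ⊆ Icc a b := Ioc_subset_Icc_self
  have : IsFiniteMeasure (volume.restrict (Ioc a b)) := isFiniteMeasure_restrict.2 (by simp)
  have hfr : MemLp f (ENNReal.ofReal r) (volume.restrict (Ioc a b)) := by
    obtain ⟨C, hC⟩ := isCompact_Icc.exists_bound_of_continuousOn hf
    refine MemLp.of_bound ((hf.mono hsub).aestronglyMeasurable measurableSet_Ioc) C ?_
    exact (ae_restrict_iff' measurableSet_Ioc).2 (ae_of_all _ fun x hx => hC x (hsub hx))
  have hf₀' : 0 ≤ᵐ[volume.restrict (Ioc a b)] f :=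
    (ae_restrict_iff' measurableSet_Ioc).2 (ae_of_all _ fun x hx => hf₀ x (hsub hx))
  simpa [intervalIntegral.integral_of_le hab, measureReal_def, hab] using
    MeasureTheory.rpow_integral_le_mul_integral_rpow hr hf₀' hfr

/-- Technical Lemma 4: for `p > q ≥ 1`,
`(a^q + ∫ g^q)^{p/q} ≤ (2 max{1,h})^{p/q - 1} (a^p + ∫ g^p)`. -/
theorem power_integral_inequality
    (h : ℝ) (hh : 0 < h)
    (p q : ℝ) (hq : 1 ≤ q) (hpq : q < p)
    (L₁ : ℝ) (hL₁ : L₁ = (2 * max 1 h) ^ (p / q - 1))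
    (a : ℝ) (ha : 0 ≤ a)
    (g : ℝ → ℝ) (hg : ContinuousOn g (Set.Icc (-h) 0))
    (hgpos : ∀ θ ∈ Set.Icc (-h) (0:ℝ), 0 ≤ g θ) :
    (a ^ q + ∫ θ in (-h)..0, g θ ^ q) ^ (p / q) ≤
      L₁ * (a ^ p + ∫ θ in (-h)..0, g θ ^ p) := by
  have hq₀ : 0 < q := one_pos.trans_le hq
  have hle : -h ≤ 0 := neg_nonpos.2 hh.le
  set r := p / q
  have hr : 1 < r := (one_lt_div hq₀).2 hpq
  have hpow : ∀ {x : ℝ}, 0 ≤ x → (x ^ q) ^ r = x ^ p := fun hx => by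
    rw [← rpow_mul hx, mul_div_cancel₀ _ hq₀.ne']
  set I := ∫ θ in (-h)..0, g θ ^ q
  set J := ∫ θ in (-h)..0, g θ ^ p
  have hI : 0 ≤ I := intervalIntegral.integral_nonneg hle fun θ hθ => rpow_nonneg (hgpos θ hθ) q
  have hJ : 0 ≤ J := intervalIntegral.integral_nonneg hle fun θ hθ => rpow_nonneg (hgpos θ hθ) p
  have hIJ : I ^ r ≤ h ^ (r - 1) * J := by
    have := intervalIntegral.rpow_integral_le_mul_integral_rpow hle hr
      (hg.rpow_const fun _ _ => Or.inr hq₀.le) fun θ hθ => rpow_nonneg (hgpos θ hθ) q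
    rwa [sub_neg_eq_add, zero_add, intervalIntegral.integral_congr fun θ hθ =>
      hpow (hgpos θ (uIcc_of_le hle ▸ hθ))] at this
  have hM₁ : 1 ≤ max 1 h ^ (r - 1) := one_le_rpow (le_max_left 1 h) (by linarith)
  have hhM : h ^ (r - 1) ≤ max 1 h ^ (r - 1) :=
    rpow_le_rpow hh.le (le_max_right 1 h) (by linarith)
  calc (a ^ q + I) ^ r
      ≤ 2 ^ (r - 1) * ((a ^ q) ^ r + I ^ r) :=
        rpow_add_le_mul_rpow_add_rpow (rpow_nonneg ha q) hI hr.le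
    _ ≤ 2 ^ (r - 1) * (max 1 h ^ (r - 1) * a ^ p + max 1 h ^ (r - 1) * J) := by
        rw [hpow ha]
        gcongr
        · exact le_mul_of_one_le_left (rpow_nonneg ha p) hM₁
        · exact hIJ.trans (mul_le_mul_of_nonneg_right hhM hJ)
    _ = L₁ * (a ^ p + J) := by
        rw [hL₁, mul_rpow zero_le_two (zero_le_one.trans (le_max_left 1 h))]
        ring
end

section
/- Let k ≥ 2 be an integer and set L₁ = 2^{k−2}(1+h)^{k−1}. Then for every a ∈ ℝ and every continuous function g : [−h,0] → ℝ one has (a² + ∫_{−h}^{0} g(θ)² dθ)^k ≤ L₁·(a^{2k} + ∫_{−h}^{0} g(θ)^{2k} dθ). -/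
/-!
Jensen's inequality for `t ↦ t ^ k` with respect to normalised Lebesgue measure on `[-h, 0]`
gives `(∫ g²) ^ k ≤ h ^ (k - 1) ∫ g ^ (2k)`, and convexity of `t ↦ t ^ k` at the two points `a²`
and `(∫ g²) / h` with weights `1 / (1 + h)`, `h / (1 + h)` bounds `(a² + ∫ g²) ^ k` by
`(1 + h) ^ (k - 1) (a ^ (2k) + h ^ (1 - k) (∫ g²) ^ k)`. The factor `2 ^ (k - 2) ≥ 1` is slack.
-/

open Set MeasureTheory

theorem pow_integral_le_measureReal_pow_mul_integral_pow {α : Type*} [MeasurableSpace α]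
    {μ : Measure α} [IsFiniteMeasure μ] {f : α → ℝ} (hf : 0 ≤ᵐ[μ] f) (hfi : Integrable f μ) (n : ℕ)
    (hfni : Integrable (fun x ↦ f x ^ (n + 1)) μ) :
    (∫ x, f x ∂μ) ^ (n + 1) ≤ μ.real univ ^ n * ∫ x, f x ^ (n + 1) ∂μ := by
  rcases eq_zero_or_neZero μ with rfl | _
  · simp
  have hm : 0 < μ.real univ := measureReal_univ_pos
  have jensen : (⨍ x, f x ∂μ) ^ (n + 1) ≤ ⨍ x, f x ^ (n + 1) ∂μ :=
    (convexOn_pow (n + 1)).map_average_le (continuous_pow _).continuousOn isClosed_Ici hf hfi hfni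
  rw [average_eq, average_eq, smul_eq_mul, smul_eq_mul] at jensen
  calc (∫ x, f x ∂μ) ^ (n + 1)
      = μ.real univ ^ (n + 1) * ((μ.real univ)⁻¹ * ∫ x, f x ∂μ) ^ (n + 1) := by
        rw [← mul_pow, mul_inv_cancel_left₀ hm.ne']
    _ ≤ μ.real univ ^ (n + 1) * ((μ.real univ)⁻¹ * ∫ x, f x ^ (n + 1) ∂μ) := by gcongr
    _ = μ.real univ ^ n * ∫ x, f x ^ (n + 1) ∂μ := by
        rw [pow_succ, mul_assoc, mul_inv_cancel_left₀ hm.ne']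

theorem intervalIntegral.pow_integral_le_pow_mul_integral_pow {f : ℝ → ℝ} {a b : ℝ}
    (hab : a ≤ b) (hf : ∀ x ∈ Ioc a b, 0 ≤ f x) (n : ℕ) (hfi : IntervalIntegrable f volume a b)
    (hfni : IntervalIntegrable (fun x ↦ f x ^ (n + 1)) volume a b) :
    (∫ x in a..b, f x) ^ (n + 1) ≤ (b - a) ^ n * ∫ x in a..b, f x ^ (n + 1) := by
  rw [intervalIntegral.integral_of_le hab, intervalIntegral.integral_of_le hab]
  have := pow_integral_le_measureReal_pow_mul_integral_pow (μ := volume.restrict (Ioc a b))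
    ((ae_restrict_iff' measurableSet_Ioc).2 (.of_forall hf)) hfi.1 n hfni.1
  simpa [measureReal_restrict_apply_univ, hab] using this

theorem add_pow_succ_le_add_pow_mul_div_pow_add_div_pow {x y s t : ℝ}
    (hx : 0 ≤ x) (hy : 0 ≤ y) (hs : 0 < s) (ht : 0 < t) (n : ℕ) :
    (x + y) ^ (n + 1) ≤ (s + t) ^ n * (x ^ (n + 1) / s ^ n + y ^ (n + 1) / t ^ n) := by
  have hst : 0 < s + t := add_pos hs ht
  calc (x + y) ^ (n + 1)
      = (s + t) ^ (n + 1) * (s / (s + t) * (x / s) + t / (s + t) * (y / t)) ^ (n + 1) := by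
        rw [← mul_pow]; congr 1; field_simp
    _ ≤ (s + t) ^ (n + 1) *
          (s / (s + t) * (x / s) ^ (n + 1) + t / (s + t) * (y / t) ^ (n + 1)) := by
        gcongr
        exact (convexOn_pow (n + 1)).2 (div_nonneg hx hs.le) (div_nonneg hy ht.le)
          (by positivity) (by positivity) (by field_simp)
    _ = (s + t) ^ n * (x ^ (n + 1) / s ^ n + y ^ (n + 1) / t ^ n) := by
        rw [div_pow, div_pow]; field_simp; ring

/-- Technical Lemma 6 (scalar case): for an integer `k ≥ 2`,
`(a² + ∫ g²)^k ≤ 2^{k-2}(1+h)^{k-1}(a^{2k} + ∫ g^{2k})`. -/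
theorem power_integral_inequality_scalar
    (h : ℝ) (hh : 0 < h)
    (k : ℕ) (hk : 2 ≤ k)
    (L₁ : ℝ) (hL₁ : L₁ = 2 ^ (k - 2) * (1 + h) ^ (k - 1))
    (a : ℝ) (g : ℝ → ℝ) (hg : ContinuousOn g (Set.Icc (-h) 0)) :
    (a ^ 2 + ∫ θ in (-h)..0, g θ ^ 2) ^ k ≤
      L₁ * (a ^ (2 * k) + ∫ θ in (-h)..0, g θ ^ (2 * k)) := by
  obtain ⟨n, rfl⟩ : ∃ n, k = n + 1 := ⟨k - 1, by omega⟩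
  set I := ∫ θ in (-h)..0, g θ ^ 2
  set J := ∫ θ in (-h)..0, g θ ^ (2 * (n + 1))
  have hh0 : -h ≤ 0 := by linarith
  have hI : 0 ≤ I := intervalIntegral.integral_nonneg hh0 fun θ _ ↦ sq_nonneg (g θ)
  have hJ : 0 ≤ J := intervalIntegral.integral_nonneg hh0 fun θ _ ↦ by
    rw [pow_mul]; positivity
  have hIJ : I ^ (n + 1) ≤ h ^ n * J := by
    have := intervalIntegral.pow_integral_le_pow_mul_integral_pow hh0
      (fun θ _ ↦ sq_nonneg (g θ)) n ((hg.pow 2).intervalIntegrable_of_Icc hh0)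
      (by simp_rw [← pow_mul]; exact (hg.pow _).intervalIntegrable_of_Icc hh0)
    simpa only [sub_neg_eq_add, zero_add, ← pow_mul] using this
  calc (a ^ 2 + I) ^ (n + 1)
      ≤ (1 + h) ^ n * ((a ^ 2) ^ (n + 1) / 1 ^ n + I ^ (n + 1) / h ^ n) :=
        add_pow_succ_le_add_pow_mul_div_pow_add_div_pow (sq_nonneg a) hI one_pos hh n
    _ ≤ (1 + h) ^ n * (a ^ (2 * (n + 1)) + J) := by
        rw [one_pow, div_one, ← pow_mul]
        gcongr
        exact (div_le_iff₀' (by positivity)).2 hIJ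
    _ ≤ L₁ * (a ^ (2 * (n + 1)) + J) := by
        have hsum : 0 ≤ a ^ (2 * (n + 1)) + J := by rw [pow_mul]; positivity
        rw [hL₁, Nat.add_sub_cancel]
        gcongr
        exact le_mul_of_one_le_left (by positivity) (one_le_pow₀ one_le_two)
end

section
/- Let χ ∈ (0, 1/√(h|α₂|)), set H₁ = (w₁χ²/|α₂|)^{1/(μ−1)}, let δ ∈ (0, H₁), and set a₁ = 1 − χ²h|α₂| and a₂ = w₁ − |α₂|χ^{−2}δ^{μ−1}. Then a₁ > 0, a₂ > 0, and for every continuous φ : [−h,0] → ℝ with |φ|_h ≤ δ one has v(φ) ≥ a₁φ(0)² + a₂ ∫_{−h}^{0} φ(θ)^{μ+1} dθ. -/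
open Real Set intervalIntegral

/-!
Expand the square: v(φ) ≥ φ(0)² + 2α₂φ(0)∫φ^μ + w₁∫φ^(μ+1), since the weight is at least w₁.
The cross term is bounded pointwise by the weighted AM-GM inequality
2|α₂ φ(0) φ^μ| ≤ |α₂|(χ²φ(0)² + χ⁻²φ^(2μ)), and φ^(2μ) = φ^(μ-1) φ^(μ+1) ≤ δ^(μ-1) φ^(μ+1)
because μ - 1 is even and |φ| ≤ δ. Integrating over an interval of length h gives the two
coefficients a₁ and a₂; their positivity is exactly the choice of χ and δ < H₁.
-/

lemma sq_mul_lt_one_of_lt_one_div_sqrt {χ x : ℝ} (hχ : 0 ≤ χ) (h : χ < 1 / √x) :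
    χ ^ 2 * x < 1 := by
  rcases le_or_gt x 0 with hx | hx
  · nlinarith [sq_nonneg χ]
  · have hs : 0 < √x := Real.sqrt_pos.mpr hx
    have hlt : χ * √x < 1 := by rwa [lt_div_iff₀ hs] at h
    calc χ ^ 2 * x = (χ * √x) ^ 2 := by rw [mul_pow, Real.sq_sqrt hx.le]
      _ < 1 := by nlinarith [mul_nonneg hχ hs.le]

lemma pow_pred_lt_of_lt_rpow_one_div {δ c : ℝ} {μ : ℕ} (hμ : 1 < μ) (hδ : 0 ≤ δ) (hc : 0 ≤ c)
    (h : δ < c ^ (1 / ((μ : ℝ) - 1))) : δ ^ (μ - 1) < c := by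
  have hcast : ((μ - 1 : ℕ) : ℝ) = (μ : ℝ) - 1 := by push_cast [Nat.cast_sub hμ.le]; ring
  have hpos : (0 : ℝ) < (μ : ℝ) - 1 := by rw [← hcast]; exact_mod_cast Nat.sub_pos_of_lt hμ
  rwa [one_div, Real.lt_rpow_inv_iff_of_pos hδ hc hpos, ← hcast, Real.rpow_natCast] at h

lemma neg_le_two_mul_mul_mul {χ : ℝ} (hχ : χ ≠ 0) (α a b : ℝ) :
    -(χ ^ 2 * |α| * a ^ 2) - |α| / χ ^ 2 * b ^ 2 ≤ 2 * α * a * b := by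
  have amgm : 2 * |a| * |b| ≤ χ ^ 2 * a ^ 2 + b ^ 2 / χ ^ 2 := by
    calc 2 * |a| * |b| = 2 * (χ * |a|) * (|b| / χ) := by field_simp
      _ ≤ (χ * |a|) ^ 2 + (|b| / χ) ^ 2 := two_mul_le_add_sq _ _
      _ = χ ^ 2 * a ^ 2 + b ^ 2 / χ ^ 2 := by rw [mul_pow, div_pow, sq_abs, sq_abs]
  have hcross : |2 * α * a * b| ≤ |α| * (χ ^ 2 * a ^ 2 + b ^ 2 / χ ^ 2) := by
    rw [abs_mul, abs_mul, abs_mul, abs_two]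
    nlinarith [abs_nonneg α]
  have := neg_abs_le (2 * α * a * b)
  rw [mul_add, mul_div_assoc'] at hcross
  linarith [show |α| * b ^ 2 / χ ^ 2 = |α| / χ ^ 2 * b ^ 2 by ring]

lemma sq_pow_le_pow_pred_mul_pow_succ {μ : ℕ} (hμ : Odd μ) {x δ : ℝ} (hx : |x| ≤ δ) :
    (x ^ μ) ^ 2 ≤ δ ^ (μ - 1) * x ^ (μ + 1) := by
  have hsplit : (x ^ μ) ^ 2 = x ^ (μ - 1) * x ^ (μ + 1) := by
    rw [← pow_mul, ← pow_add]
    congr 1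
    have := hμ.pos
    omega
  have hpred : x ^ (μ - 1) ≤ δ ^ (μ - 1) := by
    rw [← (Nat.Odd.sub_odd hμ odd_one).pow_abs]
    exact pow_le_pow_left₀ (abs_nonneg x) hx _
  rw [hsplit]
  exact mul_le_mul_of_nonneg_right hpred (hμ.add_one.pow_nonneg x)

lemma le_of_iSup_le_of_isCompact {s : Set ℝ} {f : ℝ → ℝ} {c : ℝ} (hs : IsCompact s)
    (hf : ContinuousOn f s) (h : ⨆ x : s, f x ≤ c) : ∀ x ∈ s, f x ≤ c := by
  intro x hx
  have hb : BddAbove (range fun x : s => f x) := by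
    rw [← image_eq_range]; exact (hs.image_of_continuousOn hf).bddAbove
  exact (le_ciSup hb ⟨x, hx⟩).trans h

lemma mul_integral_le_integral_mul_of_le_s13 {f g : ℝ → ℝ} {a b w : ℝ} (hab : a ≤ b)
    (hf : IntervalIntegrable f MeasureTheory.volume a b)
    (hgf : IntervalIntegrable (fun θ => g θ * f θ) MeasureTheory.volume a b)
    (hf0 : ∀ θ ∈ Icc a b, 0 ≤ f θ) (hwg : ∀ θ ∈ Icc a b, w ≤ g θ) :
    w * ∫ θ in a..b, f θ ≤ ∫ θ in a..b, g θ * f θ := by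
  rw [← integral_const_mul]
  exact integral_mono_on hab (hf.const_mul w) hgf fun θ hθ =>
    mul_le_mul_of_nonneg_right (hwg θ hθ) (hf0 θ hθ)

lemma sub_le_two_mul_mul_integral_pow {φ : ℝ → ℝ} {a b χ δ : ℝ} {μ : ℕ} (hab : a ≤ b)
    (hμ : Odd μ) (hχ : χ ≠ 0) (hφ : ContinuousOn φ (Icc a b))
    (hφδ : ∀ θ ∈ Icc a b, |φ θ| ≤ δ) (α c : ℝ) :
    -(χ ^ 2 * |α| * c ^ 2) * (b - a) - |α| / χ ^ 2 * δ ^ (μ - 1) * ∫ θ in a..b, φ θ ^ (μ + 1) ≤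
      2 * α * c * ∫ θ in a..b, φ θ ^ μ := by
  have hφ' : ContinuousOn φ (uIcc a b) := by rwa [uIcc_of_le hab]
  have hint : ∀ n : ℕ, IntervalIntegrable (fun θ => φ θ ^ n) MeasureTheory.volume a b :=
    fun n => (hφ'.pow n).intervalIntegrable
  have hpointwise : ∀ θ ∈ Icc a b,
      -(χ ^ 2 * |α| * c ^ 2) - |α| / χ ^ 2 * δ ^ (μ - 1) * φ θ ^ (μ + 1) ≤
        2 * α * c * φ θ ^ μ := by
    intro θ hθ
    have hpow := mul_le_mul_of_nonneg_left (sq_pow_le_pow_pred_mul_pow_succ hμ (hφδ θ hθ))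
      (by positivity : 0 ≤ |α| / χ ^ 2)
    linarith [neg_le_two_mul_mul_mul hχ α c (φ θ ^ μ)]
  have hmono := integral_mono_on hab (intervalIntegrable_const.sub ((hint _).const_mul _))
    ((hint μ).const_mul _) hpointwise
  rwa [integral_sub intervalIntegrable_const ((hint _).const_mul _), integral_const,
    integral_const_mul, integral_const_mul, smul_eq_mul, mul_comm (b - a)] at hmono

/-- Lower bound for the scalar Lyapunov–Krasovskii functional. -/
theorem scalar_functional_lower_bound
    (h : ℝ) (hh : 0 < h) (μ : ℕ) (hμodd : Odd μ) (hμ : 1 < μ)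
    (α₂ : ℝ) (hα₂ : α₂ ≠ 0)
    (w₁ w₂ : ℝ) (hw₁ : 0 < w₁) (hw₂ : 0 < w₂)
    (χ H₁ δ a₁ a₂ : ℝ)
    (hχ : χ ∈ Set.Ioo 0 (1 / Real.sqrt (h * |α₂|)))
    (hH₁ : H₁ = (w₁ * χ ^ 2 / |α₂|) ^ (1 / ((μ:ℝ) - 1)))
    (hδ : δ ∈ Set.Ioo 0 H₁)
    (ha₁ : a₁ = 1 - χ ^ 2 * h * |α₂|)
    (ha₂ : a₂ = w₁ - |α₂| / χ ^ 2 * δ ^ (μ - 1)) :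
    0 < a₁ ∧ 0 < a₂ ∧
      ∀ φ : ℝ → ℝ, ContinuousOn φ (Set.Icc (-h) 0) →
        (⨆ θ : Set.Icc (-h) (0:ℝ), |φ θ.1|) ≤ δ →
        a₁ * φ 0 ^ 2 + a₂ * ∫ θ in (-h)..0, φ θ ^ (μ + 1) ≤
          (φ 0 + α₂ * ∫ θ in (-h)..0, φ θ ^ μ) ^ 2 +
            ∫ θ in (-h)..0, (w₁ + (h + θ) * w₂) * φ θ ^ (μ + 1) := by
  obtain ⟨hχ0, hχ1⟩ := hχ
  obtain ⟨hδ0, hδH₁⟩ := hδ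
  have hα₂pos : 0 < |α₂| := abs_pos.mpr hα₂
  have hδpow : δ ^ (μ - 1) < w₁ * χ ^ 2 / |α₂| :=
    pow_pred_lt_of_lt_rpow_one_div hμ hδ0.le (by positivity) (hH₁ ▸ hδH₁)
  refine ⟨?_, ?_, fun φ hφ hsup => ?_⟩
  · rw [ha₁, mul_assoc]
    linarith [sq_mul_lt_one_of_lt_one_div_sqrt hχ0.le hχ1]
  · rw [lt_div_iff₀ hα₂pos] at hδpow
    rw [ha₂, sub_pos, div_mul_eq_mul_div, div_lt_iff₀ (by positivity)]
    linarith
  have hle : -h ≤ (0 : ℝ) := by linarith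
  have hφ' : ContinuousOn φ (uIcc (-h) 0) := by rwa [uIcc_of_le hle]
  have hcross := sub_le_two_mul_mul_integral_pow hle hμodd hχ0.ne' hφ
    (le_of_iSup_le_of_isCompact isCompact_Icc hφ.abs hsup) α₂ (φ 0)
  have hweight : w₁ * ∫ θ in (-h)..0, φ θ ^ (μ + 1) ≤
      ∫ θ in (-h)..0, (w₁ + (h + θ) * w₂) * φ θ ^ (μ + 1) :=
    mul_integral_le_integral_mul_of_le_s13 hle (hφ'.pow _).intervalIntegrable
      ((by fun_prop : Continuous fun θ => w₁ + (h + θ) * w₂).continuousOn.mul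
        (hφ'.pow _)).intervalIntegrable
      (fun θ _ => hμodd.add_one.pow_nonneg (φ θ))
      (fun θ hθ => le_add_of_nonneg_right (mul_nonneg (by linarith [hθ.1]) hw₂.le))
  rw [ha₁, ha₂]
  nlinarith [sq_nonneg (α₂ * ∫ θ in (-h)..0, φ θ ^ μ)]
end

section
/- Fix r > 1, δ > 0, and set k₄ = 2·h·m·m₂·k₂·r^μ·(1 + r^{μ−1}). Let x be a solution of the delay system and let t ≥ h be such that ‖x(ξ)‖ ≤ δ for all ξ ∈ [t−2h, t] and ‖x(ξ)‖ ≤ r·‖x(t)‖ for all ξ ∈ [t−2h, t]. Then the function s ↦ V(x(s)) is differentiable at t and its derivative at t is at most −(w − k₄δ^{μ−1})·‖x(t)‖^{γ+μ−1}. -/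
open Real Set RealInnerProductSpace

/-! Along the solution, `d/dt V(x t) = ⟪∇V(x t), f(x t, x (t-h))⟫`. Compared with the undelayed
value `⟪∇V(x t), f(x t, x t)⟫ ≤ -w‖x t‖^(γ+μ-1)`, the error is at most
`‖∇V(x t)‖ · Lip · ‖x t - x (t-h)‖`. On `[t-2h, t]` the growth bound and the Razumikhin condition
give `‖ẋ‖ ≤ 2mδ^(μ-1) r‖x t‖`, so the mean value inequality bounds `‖x t - x (t-h)‖` by `h` times
that; the bound on `∂f/∂y` on the ball of radius `r‖x t‖` gives the Lipschitz constant
`m₂(1 + r^(μ-1))‖x t‖^(μ-1)`. Multiplying out, the error is `≤ k₄δ^(μ-1)‖x t‖^(γ+μ-1)`. -/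

theorem rpow_le_rpow_sub_one_mul {a b δ μ : ℝ} (ha : 0 ≤ a) (haδ : a ≤ δ) (hab : a ≤ b)
    (hμ : 1 ≤ μ) : a ^ μ ≤ δ ^ (μ - 1) * b :=
  calc a ^ μ = a ^ (μ - 1) * a := by rw [← rpow_add_one' ha (by linarith), sub_add_cancel]
    _ ≤ δ ^ (μ - 1) * b :=
      mul_le_mul (rpow_le_rpow ha haδ (by linarith)) hab ha (rpow_nonneg (ha.trans haδ) _)

theorem norm_image_sub_le_of_norm_hasDerivAt_Ioo_le {E : Type*} [NormedAddCommGroup E]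
    [NormedSpace ℝ E] {x x' : ℝ → E} {a b C : ℝ} (hab : a ≤ b) (hcont : ContinuousOn x (Icc a b))
    (hderiv : ∀ s ∈ Ioo a b, HasDerivAt x (x' s) s) (hbound : ∀ s ∈ Ioo a b, ‖x' s‖ ≤ C) :
    ‖x b - x a‖ ≤ C * (b - a) := by
  rcases hab.eq_or_lt with rfl | hab
  · simp
  have hinterior : ∀ a' ∈ Ioo a b, ‖x b - x a'‖ ≤ C * (b - a') := fun a' ha' =>
    norm_image_sub_le_of_norm_deriv_right_le_segment
      (hcont.mono (Icc_subset_Icc ha'.1.le le_rfl))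
      (fun s hs => (hderiv s ⟨ha'.1.trans_le hs.1, hs.2⟩).hasDerivWithinAt)
      (fun s hs => hbound s ⟨ha'.1.trans_le hs.1, hs.2⟩) b ⟨ha'.2.le, le_rfl⟩
  refine ContinuousWithinAt.closure_le (s := Ioo a b) ?_ ?_ ?_ hinterior
  · rw [closure_Ioo hab.ne]
    exact left_mem_Icc.2 hab.le
  · exact (continuousWithinAt_const.sub
      ((hcont a (left_mem_Icc.2 hab.le)).mono Ioo_subset_Icc_self)).norm
  · exact Continuous.continuousWithinAt (by fun_prop)

section DelayEquation

variable {E F : Type*} [NormedAddCommGroup E] [NormedSpace ℝ E] [NormedAddCommGroup F]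
  [NormedSpace ℝ F]

theorem norm_sub_delay_le {f : E × E → E} {x : ℝ → E} {h m μ δ R t : ℝ} (hh : 0 ≤ h)
    (hm : 0 ≤ m) (hμ : 1 ≤ μ) (hfb : ∀ u v : E, ‖f (u, v)‖ ≤ m * (‖u‖ ^ μ + ‖v‖ ^ μ))
    (hxc : ContinuousOn x (Icc (t - h) t))
    (hxd : ∀ s ∈ Ioo (t - h) t, HasDerivAt x (f (x s, x (s - h))) s)
    (hxδ : ∀ ξ ∈ Icc (t - 2 * h) t, ‖x ξ‖ ≤ δ) (hxR : ∀ ξ ∈ Icc (t - 2 * h) t, ‖x ξ‖ ≤ R) :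
    ‖x t - x (t - h)‖ ≤ 2 * m * δ ^ (μ - 1) * R * h := by
  have hbound : ∀ s ∈ Ioo (t - h) t, ‖f (x s, x (s - h))‖ ≤ 2 * m * δ ^ (μ - 1) * R := by
    intro s hs
    have hs₀ : s ∈ Icc (t - 2 * h) t := ⟨by linarith [hs.1], hs.2.le⟩
    have hs₁ : s - h ∈ Icc (t - 2 * h) t := ⟨by linarith [hs.1], by linarith [hs.2]⟩
    calc ‖f (x s, x (s - h))‖ ≤ m * (‖x s‖ ^ μ + ‖x (s - h)‖ ^ μ) := hfb _ _
      _ ≤ m * (δ ^ (μ - 1) * R + δ ^ (μ - 1) * R) := by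
        gcongr
        · exact rpow_le_rpow_sub_one_mul (norm_nonneg _) (hxδ s hs₀) (hxR s hs₀) hμ
        · exact rpow_le_rpow_sub_one_mul (norm_nonneg _) (hxδ _ hs₁) (hxR _ hs₁) hμ
      _ = 2 * m * δ ^ (μ - 1) * R := by ring
  simpa using norm_image_sub_le_of_norm_hasDerivAt_Ioo_le (by linarith) hxc hxd hbound

theorem norm_sub_le_of_norm_fderiv_snd_le_s15 {f : E × E → F} (hf : Differentiable ℝ f)
    {m₂ μ R : ℝ} (hμ : 1 ≤ μ) (hm₂ : 0 ≤ m₂)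
    (hfy : ∀ u v : E, ‖fderiv ℝ (fun v' => f (u, v')) v‖ ≤ m₂ * (‖u‖ ^ (μ - 1) + ‖v‖ ^ (μ - 1)))
    {u v : E} (hu : ‖u‖ ≤ R) (hv : ‖v‖ ≤ R) :
    ‖f (u, v) - f (u, u)‖ ≤ m₂ * (‖u‖ ^ (μ - 1) + R ^ (μ - 1)) * ‖v - u‖ := by
  refine (convex_closedBall (0 : E) R).norm_image_sub_le_of_norm_fderiv_le
    (fun z _ => (hf.comp (by fun_prop)).differentiableAt) (fun z hz => ?_)
    (mem_closedBall_zero_iff.2 hu) (mem_closedBall_zero_iff.2 hv)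
  refine (hfy u z).trans ?_
  gcongr
  exact mem_closedBall_zero_iff.1 hz

end DelayEquation

theorem delay_error_le {h m m₂ k₂ r δ μ γ N : ℝ} (hh : 0 ≤ h) (hm : 0 ≤ m) (hm₂ : 0 ≤ m₂)
    (hk₂ : 0 ≤ k₂) (hr : 1 ≤ r) (hδ : 0 ≤ δ) (hμ : 1 < μ) (hγ : 1 ≤ γ) (hN : 0 ≤ N) :
    k₂ * N ^ (γ - 1) * (m₂ * (N ^ (μ - 1) + (r * N) ^ (μ - 1)) * (2 * m * δ ^ (μ - 1) * (r * N) * h))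
      ≤ 2 * h * m * m₂ * k₂ * r ^ μ * (1 + r ^ (μ - 1)) * δ ^ (μ - 1) * N ^ (γ + μ - 1) := by
  have hpow : N ^ (γ - 1) * N ^ (μ - 1) * N = N ^ (γ + μ - 1) := by
    rw [← rpow_add' hN (by linarith), ← rpow_add_one' hN (by linarith)]
    ring_nf
  have hr_le : r ≤ r ^ μ := self_le_rpow_of_one_le hr hμ.le
  calc _ = 2 * h * m * m₂ * k₂ * r * (1 + r ^ (μ - 1)) * δ ^ (μ - 1)
        * (N ^ (γ - 1) * N ^ (μ - 1) * N) := by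
        rw [mul_rpow (by linarith) hN]
        ring
    _ ≤ _ := by
      rw [hpow]
      gcongr

theorem lyapunov_derivative_razumikhin_general
    {n : ℕ}
    (h μ : ℝ) (hh : 0 < h) (hμ : 1 < μ)
    (f : EuclideanSpace ℝ (Fin n) × EuclideanSpace ℝ (Fin n) → EuclideanSpace ℝ (Fin n))
    (hf : ContDiff ℝ 1 f)
    (m m₂ : ℝ) (hm : 0 < m) (hm₂ : 0 < m₂)
    (hfb : ∀ x y : EuclideanSpace ℝ (Fin n), ‖f (x, y)‖ ≤ m * (‖x‖ ^ μ + ‖y‖ ^ μ))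
    (hfy : ∀ x y : EuclideanSpace ℝ (Fin n),
      ‖fderiv ℝ (fun y' => f (x, y')) y‖ ≤ m₂ * (‖x‖ ^ (μ - 1) + ‖y‖ ^ (μ - 1)))
    (γ : ℝ) (hγ : 2 ≤ γ)
    (V : EuclideanSpace ℝ (Fin n) → ℝ) (hV : ContDiff ℝ 1 V)
    (k₂ w : ℝ) (hk₂ : 0 < k₂)
    (hgrad : ∀ x : EuclideanSpace ℝ (Fin n), ‖gradient V x‖ ≤ k₂ * ‖x‖ ^ (γ - 1))
    (hdV : ∀ x : EuclideanSpace ℝ (Fin n),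
      ⟪gradient V x, f (x, x)⟫ ≤ -w * ‖x‖ ^ (γ + μ - 1))
    (r δ k₄ : ℝ) (hr : 1 < r) (hδ : 0 < δ)
    (hk₄ : k₄ = 2 * h * m * m₂ * k₂ * r ^ μ * (1 + r ^ (μ - 1)))
    (x : ℝ → EuclideanSpace ℝ (Fin n))
    (hxc : ContinuousOn x (Set.Ici (-h)))
    (hxd : ∀ t > (0:ℝ), HasDerivAt x (f (x t, x (t - h))) t)
    (t : ℝ) (ht : h ≤ t)
    (hxδ : ∀ ξ ∈ Set.Icc (t - 2 * h) t, ‖x ξ‖ ≤ δ)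
    (hraz : ∀ ξ ∈ Set.Icc (t - 2 * h) t, ‖x ξ‖ ≤ r * ‖x t‖) :
    DifferentiableAt ℝ (fun s => V (x s)) t ∧
      deriv (fun s => V (x s)) t ≤ -(w - k₄ * δ ^ (μ - 1)) * ‖x t‖ ^ (γ + μ - 1) := by
  have hdisp : ‖x t - x (t - h)‖ ≤ 2 * m * δ ^ (μ - 1) * (r * ‖x t‖) * h :=
    norm_sub_delay_le hh.le hm.le hμ.le hfb
      (hxc.mono fun s hs => by simp only [mem_Ici]; linarith [hs.1])
      (fun s hs => hxd s (by linarith [hs.1])) hxδ hraz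
  have hlip := norm_sub_le_of_norm_fderiv_snd_le_s15 (hf.differentiable one_ne_zero) hμ.le hm₂.le hfy
    (hraz t ⟨by linarith, le_rfl⟩) (hraz (t - h) ⟨by linarith, by linarith⟩)
  have hchain : HasDerivAt (fun s => V (x s)) ⟪gradient V (x t), f (x t, x (t - h))⟫ t := by
    rw [inner_gradient_left]
    exact (hV.differentiable one_ne_zero (x t)).hasFDerivAt.comp_hasDerivAt t
      (hxd t (hh.trans_le ht))
  refine ⟨hchain.differentiableAt, hchain.deriv.trans_le ?_⟩
  calc ⟪gradient V (x t), f (x t, x (t - h))⟫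
      = ⟪gradient V (x t), f (x t, x t)⟫
        + ⟪gradient V (x t), f (x t, x (t - h)) - f (x t, x t)⟫ := by
        rw [inner_sub_right]; ring
    _ ≤ -w * ‖x t‖ ^ (γ + μ - 1) + k₂ * ‖x t‖ ^ (γ - 1) * (m₂ * (‖x t‖ ^ (μ - 1)
        + (r * ‖x t‖) ^ (μ - 1)) * (2 * m * δ ^ (μ - 1) * (r * ‖x t‖) * h)) := by
      refine add_le_add (hdV _) ((real_inner_le_norm _ _).trans ?_)
      rw [norm_sub_rev] at hdisp
      gcongr
      · exact hgrad _
      · exact hlip.trans (by gcongr)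
    _ ≤ -w * ‖x t‖ ^ (γ + μ - 1) + k₄ * δ ^ (μ - 1) * ‖x t‖ ^ (γ + μ - 1) := by
      rw [hk₄]
      linarith [delay_error_le hh.le hm.le hm₂.le hk₂.le hr.le hδ.le hμ
        (by linarith : (1 : ℝ) ≤ γ) (norm_nonneg (x t))]
    _ = -(w - k₄ * δ ^ (μ - 1)) * ‖x t‖ ^ (γ + μ - 1) := by ring

/-- Derivative bound for the Lyapunov function along solutions satisfying a
Razumikhin-type condition `‖x(ξ)‖ ≤ r‖x(t)‖` on `[t-2h, t]`. -/
theorem lyapunov_derivative_razumikhin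
    {n : ℕ} (hn : 1 ≤ n)
    (h μ : ℝ) (hh : 0 < h) (hμ : 1 < μ)
    (f : EuclideanSpace ℝ (Fin n) × EuclideanSpace ℝ (Fin n) → EuclideanSpace ℝ (Fin n))
    (hf : ContDiff ℝ 1 f)
    (m m₂ : ℝ) (hm : 0 < m) (hm₂ : 0 < m₂)
    (hfb : ∀ x y : EuclideanSpace ℝ (Fin n), ‖f (x, y)‖ ≤ m * (‖x‖ ^ μ + ‖y‖ ^ μ))
    (hfy : ∀ x y : EuclideanSpace ℝ (Fin n),
      ‖fderiv ℝ (fun y' => f (x, y')) y‖ ≤ m₂ * (‖x‖ ^ (μ - 1) + ‖y‖ ^ (μ - 1)))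
    (γ : ℝ) (hγ : 2 ≤ γ)
    (V : EuclideanSpace ℝ (Fin n) → ℝ) (hV : ContDiff ℝ 1 V)
    (k₂ w : ℝ) (hk₂ : 0 < k₂) (hw : 0 < w)
    (hgrad : ∀ x : EuclideanSpace ℝ (Fin n), ‖gradient V x‖ ≤ k₂ * ‖x‖ ^ (γ - 1))
    (hdV : ∀ x : EuclideanSpace ℝ (Fin n),
      ⟪gradient V x, f (x, x)⟫ ≤ -w * ‖x‖ ^ (γ + μ - 1))
    (r δ k₄ : ℝ) (hr : 1 < r) (hδ : 0 < δ)
    (hk₄ : k₄ = 2 * h * m * m₂ * k₂ * r ^ μ * (1 + r ^ (μ - 1)))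
    (x : ℝ → EuclideanSpace ℝ (Fin n))
    (hxc : ContinuousOn x (Set.Ici (-h)))
    (hxd : ∀ t > (0:ℝ), HasDerivAt x (f (x t, x (t - h))) t)
    (t : ℝ) (ht : h ≤ t)
    (hxδ : ∀ ξ ∈ Set.Icc (t - 2 * h) t, ‖x ξ‖ ≤ δ)
    (hraz : ∀ ξ ∈ Set.Icc (t - 2 * h) t, ‖x ξ‖ ≤ r * ‖x t‖) :
    DifferentiableAt ℝ (fun s => V (x s)) t ∧
      deriv (fun s => V (x s)) t ≤ -(w - k₄ * δ ^ (μ - 1)) * ‖x t‖ ^ (γ + μ - 1) :=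
  lyapunov_derivative_razumikhin_general h μ hh hμ f hf m m₂ hm hm₂ hfb hfy γ hγ V hV k₂ w hk₂ hgrad
    hdV r δ k₄ hr hδ hk₄ x hxc hxd t ht hxδ hraz
end

section
/- Let L > 0, p > 1, and u₀ > 0. Suppose v : [0,∞) → ℝ is differentiable with v(t) ≥ 0 for all t ≥ 0, v(0) ≤ u₀, and v′(t) ≤ −L·v(t)^p for all t ≥ 0. Then v(t) ≤ u₀·(1 + L(p−1)u₀^{p−1}·t)^{−1/(p−1)} for all t ≥ 0. -/
/-!
Along a positive solution, `w(s) = v(s)^(1-p) - L(p-1) s` is nondecreasing, since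
`w' = (p-1) v^(-p) (-v' - L v^p) ≥ 0`. Hence `v(t)^(1-p) ≥ u₀^(1-p) + L(p-1) t`, and raising to the
negative power `1/(1-p)` gives the bound. Positivity of `v` on `[0, t]` whenever `v t > 0` comes
from `v' ≤ 0`, which makes `v` antitone.
-/

open Real Set

theorem Convex.monotoneOn_of_hasDerivWithinAt_nonneg {D : Set ℝ} (hD : Convex ℝ D)
    {f f' : ℝ → ℝ} (hf : ∀ x ∈ D, HasDerivWithinAt f (f' x) D x)
    (hf' : ∀ x ∈ interior D, 0 ≤ f' x) : MonotoneOn f D :=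
  _root_.monotoneOn_of_hasDerivWithinAt_nonneg hD (fun x hx => (hf x hx).continuousWithinAt)
    (fun x hx => (hf x (interior_subset hx)).mono interior_subset) hf'

theorem Convex.antitoneOn_of_hasDerivWithinAt_nonpos {D : Set ℝ} (hD : Convex ℝ D)
    {f f' : ℝ → ℝ} (hf : ∀ x ∈ D, HasDerivWithinAt f (f' x) D x)
    (hf' : ∀ x ∈ interior D, f' x ≤ 0) : AntitoneOn f D :=
  _root_.antitoneOn_of_hasDerivWithinAt_nonpos hD (fun x hx => (hf x hx).continuousWithinAt)
    (fun x hx => (hf x (interior_subset hx)).mono interior_subset) hf'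

theorem Convex.monotoneOn_rpow_one_sub_sub_mul {D : Set ℝ} (hD : Convex ℝ D) {L p : ℝ}
    (hp : 1 ≤ p) {v v' : ℝ → ℝ} (hv : ∀ x ∈ D, HasDerivWithinAt v (v' x) D x)
    (hpos : ∀ x ∈ D, 0 < v x) (hineq : ∀ x ∈ interior D, v' x ≤ -L * v x ^ p) :
    MonotoneOn (fun s => v s ^ (1 - p) - L * (p - 1) * s) D := by
  refine hD.monotoneOn_of_hasDerivWithinAt_nonneg
    (f' := fun x => v' x * (1 - p) * v x ^ (1 - p - 1) - L * (p - 1) * 1)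
    (fun x hx => ((hv x hx).rpow_const (Or.inl (hpos x hx).ne')).sub
      ((hasDerivWithinAt_id x D).const_mul _)) fun x hx => ?_
  have hvx := hpos x (interior_subset hx)
  have hcancel : v x ^ p * v x ^ (1 - p - 1) = 1 := by
    rw [← rpow_add hvx]; norm_num
  have hnonneg : 0 ≤ (-L * v x ^ p - v' x) * ((p - 1) * v x ^ (1 - p - 1)) :=
    mul_nonneg (by linarith [hineq x hx]) (mul_nonneg (by linarith) (rpow_pos_of_pos hvx _).le)
  linear_combination hnonneg - L * (p - 1) * hcancel

theorem le_mul_one_add_rpow_of_rpow_one_sub_add_le {p u x c t : ℝ} (hp : 1 < p) (hu : 0 < u)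
    (hx : 0 < x) (hct : 0 ≤ c * t) (h : u ^ (1 - p) + c * t ≤ x ^ (1 - p)) :
    x ≤ u * (1 + c * u ^ (p - 1) * t) ^ (-(1 / (p - 1))) := by
  have hb : 0 < 1 + c * u ^ (p - 1) * t := by
    have : 0 ≤ c * u ^ (p - 1) * t := by
      rw [mul_right_comm]; exact mul_nonneg hct (rpow_pos_of_pos hu _).le
    linarith
  have hcancel : u ^ (1 - p) * u ^ (p - 1) = 1 := by
    rw [← rpow_add hu]; norm_num
  have hpow : (u * (1 + c * u ^ (p - 1) * t) ^ (-(1 / (p - 1)))) ^ (1 - p)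
      = u ^ (1 - p) + c * t := by
    rw [mul_rpow hu.le (rpow_nonneg hb.le _), ← rpow_mul hb.le,
      show -(1 / (p - 1)) * (1 - p) = 1 by field_simp [(by linarith : p - 1 ≠ 0)]; ring,
      rpow_one]
    linear_combination (c * t) * hcancel
  rw [← rpow_le_rpow_iff_of_neg (by positivity) hx (by linarith : 1 - p < 0), hpow]
  exact h

/-- Comparison lemma: if `v' ≤ -L v^p` with `v ≥ 0`, `v(0) ≤ u₀`, then
`v(t) ≤ u₀ (1 + L(p-1)u₀^{p-1} t)^{-1/(p-1)}`. -/
theorem comparison_decay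
    (L p u₀ : ℝ) (hL : 0 < L) (hp : 1 < p) (hu₀ : 0 < u₀)
    (v v' : ℝ → ℝ)
    (hderiv : ∀ t ∈ Set.Ici (0:ℝ), HasDerivWithinAt v (v' t) (Set.Ici (0:ℝ)) t)
    (hvnonneg : ∀ t ∈ Set.Ici (0:ℝ), 0 ≤ v t)
    (hv0 : v 0 ≤ u₀)
    (hineq : ∀ t ∈ Set.Ici (0:ℝ), v' t ≤ -L * v t ^ p) :
    ∀ t ∈ Set.Ici (0:ℝ),
      v t ≤ u₀ * (1 + L * (p - 1) * u₀ ^ (p - 1) * t) ^ (-(1 / (p - 1))) := by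
  intro t ht
  rcases le_or_gt (v t) 0 with hvt | hvt
  · have : 0 ≤ 1 + L * (p - 1) * u₀ ^ (p - 1) * t := by
      have : 0 < p - 1 := by linarith
      have : (0 : ℝ) ≤ t := ht
      positivity
    exact hvt.trans (by positivity)
  have hanti : AntitoneOn v (Ici 0) := (convex_Ici 0).antitoneOn_of_hasDerivWithinAt_nonpos hderiv
    fun x hx => (hineq x (interior_subset hx)).trans
      (by nlinarith [rpow_nonneg (hvnonneg x (interior_subset hx)) p])
  have hIcc : Icc 0 t ⊆ Ici (0 : ℝ) := Icc_subset_Ici_self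
  have hpos : ∀ s ∈ Icc 0 t, 0 < v s := fun s hs =>
    hvt.trans_le (hanti (hIcc hs) ht hs.2)
  have hmono := (convex_Icc 0 t).monotoneOn_rpow_one_sub_sub_mul hp.le
    (fun s hs => (hderiv s (hIcc hs)).mono hIcc) hpos
    fun s hs => hineq s (hIcc (interior_subset hs))
  have hw := hmono (left_mem_Icc.2 ht) (right_mem_Icc.2 ht) ht
  have hinit : u₀ ^ (1 - p) ≤ v 0 ^ (1 - p) :=
    rpow_le_rpow_of_nonpos (hpos 0 (left_mem_Icc.2 ht)) hv0 (by linarith)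
  refine le_mul_one_add_rpow_of_rpow_one_sub_add_le hp hu₀ hvt ?_ ?_
  · exact mul_nonneg (mul_nonneg hL.le (by linarith)) ht
  · simp only [mul_zero, sub_zero] at hw
    linarith
end

section
/- Let μ ≥ 3 be an odd integer and let ζ satisfy 0 < ζ < min{1/(μ+1), 4/(μ+1)²}. Set η = min{ζ, 1 − ζ(μ+1), (ζ/(1+ζ))·(1 − ζ(1+μ)²/4)}. Then for every z ∈ ℝ one has z^{2μ} − ζμ·z^{μ+1} + ζ·z^μ + ζ ≥ η·(z^{2μ} + 1). -/
/-!
Write `x = z^μ`, so that the left side is `η (x² + 1)` and the right side is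
`x² - ζμ z^{μ+1} + ζx + ζ`. For `|z| ≤ 1` the middle term is at most `ζμ|x|`, and the claim
reduces to the nonnegativity of the quadratic `(1 - η)t² - ζ(μ + 1)t + (ζ - η)` at `t = |x|`; the
third term of `η` is chosen exactly so that its discriminant is nonpositive. For `|z| ≥ 1` the
middle term is at most `ζμx²` and `x² + x ≥ 0`, so the first two terms of `η` suffice.
-/

section OrderedRing

variable {R : Type*} [CommRing R] [LinearOrder R] [IsStrictOrderedRing R]

theorem quadratic_nonneg_of_discrim_nonpos {a b c : R} (ha : 0 < a) (h : discrim a b c ≤ 0)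
    (x : R) : 0 ≤ a * (x * x) + b * x + c := by
  have key : 4 * a * (a * (x * x) + b * x + c) = (2 * a * x + b) ^ 2 - discrim a b c := by
    rw [discrim]; ring
  refine nonneg_of_mul_nonneg_right (a := 4 * a) ?_ (by positivity)
  rw [key]
  linarith [sq_nonneg (2 * a * x + b)]

theorem pow_succ_le_abs_pow {z : R} (hz : |z| ≤ 1) (n : ℕ) : z ^ (n + 1) ≤ |z ^ n| :=
  calc z ^ (n + 1) ≤ |z ^ (n + 1)| := le_abs_self _
    _ = |z ^ n| * |z| := by rw [pow_succ, abs_mul]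
    _ ≤ |z ^ n| := mul_le_of_le_one_right (abs_nonneg _) hz

theorem natCast_mul_pow_succ_le {z : R} (hz : 1 ≤ |z|) (n : ℕ) :
    (n : R) * z ^ (n + 1) ≤ n * (z ^ n) ^ 2 := by
  rcases Nat.eq_zero_or_pos n with rfl | hn
  · simp
  gcongr
  calc z ^ (n + 1) ≤ |z| ^ (n + 1) := abs_pow z (n + 1) ▸ le_abs_self _
    _ ≤ |z| ^ (2 * n) := pow_le_pow_right₀ hz (by omega)
    _ = (z ^ n) ^ 2 := by rw [pow_mul', ← abs_pow, sq_abs]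

end OrderedRing

namespace Example2

variable {m ζ η x w : ℝ}

theorem discrim_nonpos_of_mul_le (hη : η * (1 + ζ) ≤ ζ * (1 - ζ * (1 + m) ^ 2 / 4)) :
    discrim (1 - η) (-(ζ * (m + 1))) (ζ - η) ≤ 0 := by
  rw [discrim]
  nlinarith [sq_nonneg η]

theorem bound_of_mul_le_mul_abs (hζ : 0 ≤ ζ) (hη : η < 1)
    (hdisc : discrim (1 - η) (-(ζ * (m + 1))) (ζ - η) ≤ 0) (hw : m * w ≤ m * |x|) :
    η * (x ^ 2 + 1) ≤ x ^ 2 - ζ * m * w + ζ * x + ζ := by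
  have hq := quadratic_nonneg_of_discrim_nonpos (sub_pos.2 hη) hdisc |x|
  rw [← sq, sq_abs] at hq
  have hmw : ζ * (m * w) ≤ ζ * (m * |x|) := mul_le_mul_of_nonneg_left hw hζ
  have hx : ζ * -|x| ≤ ζ * x := mul_le_mul_of_nonneg_left (neg_abs_le x) hζ
  linarith

theorem bound_of_mul_le_mul_sq (hζ : 0 ≤ ζ) (hηζ : η ≤ ζ) (hη : η ≤ 1 - ζ * (m + 1))
    (hx : 1 ≤ x ^ 2) (hw : m * w ≤ m * x ^ 2) :
    η * (x ^ 2 + 1) ≤ x ^ 2 - ζ * m * w + ζ * x + ζ := by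
  have hxx : 0 ≤ x ^ 2 + x := by nlinarith [sq_nonneg (x + 1)]
  have hmw : ζ * (m * w) ≤ ζ * (m * x ^ 2) := mul_le_mul_of_nonneg_left hw hζ
  linarith [mul_nonneg hζ hxx, mul_nonneg (sub_nonneg.2 hη) (sq_nonneg x)]

end Example2

theorem example2_polynomial_inequality_general
    (μ : ℕ)
    (ζ : ℝ) (hζ0 : 0 < ζ)
    (η : ℝ)
    (hη : η = min ζ (min (1 - ζ * ((μ:ℝ) + 1))
      ((ζ / (1 + ζ)) * (1 - ζ * (1 + (μ:ℝ)) ^ 2 / 4)))) :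
    ∀ z : ℝ, η * (z ^ (2 * μ) + 1) ≤
      z ^ (2 * μ) - ζ * (μ:ℝ) * z ^ (μ + 1) + ζ * z ^ μ + ζ := by
  intro z
  have hηζ : η ≤ ζ := hη ▸ min_le_left _ _
  have hη1 : η ≤ 1 - ζ * (μ + 1) := hη ▸ (min_le_right _ _).trans (min_le_left _ _)
  have hη2 : η * (1 + ζ) ≤ ζ * (1 - ζ * (1 + μ) ^ 2 / 4) := by
    have h := hη ▸ (min_le_right _ _).trans (min_le_right _ _)
    rwa [div_mul_eq_mul_div, le_div_iff₀ (by positivity)] at h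
  have hμ0 : (0 : ℝ) ≤ μ := Nat.cast_nonneg μ
  rw [pow_mul']
  rcases le_total |z| 1 with hz | hz
  · have hη_lt : η < 1 := hη1.trans_lt (sub_lt_self 1 (by positivity))
    exact Example2.bound_of_mul_le_mul_abs hζ0.le hη_lt (Example2.discrim_nonpos_of_mul_le hη2)
      (mul_le_mul_of_nonneg_left (pow_succ_le_abs_pow hz μ) hμ0)
  · refine Example2.bound_of_mul_le_mul_sq hζ0.le hηζ hη1 ?_ (natCast_mul_pow_succ_le hz μ)
    rw [← pow_mul', pow_mul]
    exact one_le_pow₀ ((one_le_sq_iff_one_le_abs z).2 hz)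

/-- The polynomial inequality `z^{2μ} - ζμz^{μ+1} + ζz^μ + ζ ≥ η(z^{2μ} + 1)` from Example 2. -/
theorem example2_polynomial_inequality
    (μ : ℕ) (hμodd : Odd μ) (hμ : 3 ≤ μ)
    (ζ : ℝ) (hζ0 : 0 < ζ)
    (hζ1 : ζ < min (1 / ((μ:ℝ) + 1)) (4 / ((μ:ℝ) + 1) ^ 2))
    (η : ℝ)
    (hη : η = min ζ (min (1 - ζ * ((μ:ℝ) + 1))
      ((ζ / (1 + ζ)) * (1 - ζ * (1 + (μ:ℝ)) ^ 2 / 4)))) :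
    ∀ z : ℝ, η * (z ^ (2 * μ) + 1) ≤
      z ^ (2 * μ) - ζ * (μ:ℝ) * z ^ (μ + 1) + ζ * z ^ μ + ζ :=
  example2_polynomial_inequality_general μ ζ hζ0 η hη
end
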